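/- arXiv:2509.05158 — 13 statements merged into one kernel-verified Lean document; each statement's English description precedes it below -/
import Mathlib

section
/- For every integer u ≥ 2, the set of values ⌊(u·n − 1)/(u − 1)⌋ as n ranges over the positive integers equals the set of positive integers not divisible by u. -/
private lemma ediv_helper (q r k : ℤ) (hk : 0 < k) (h0 : 0 ≤ r) (h1 : r < k) :
    (q * k + r) / k = q := by
  rw [add_comm, Int.add_mul_ediv_right _ _ (ne_of_gt hk),
    Int.ediv_eq_zero_of_lt h0 h1, zero_add]

private lemma floor_eq_ediv (u : ℕ) (hu : 2 ≤ u) (n : ℕ) :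
    ⌊((u : ℚ) * n - 1) / ((u : ℚ) - 1)⌋ = ((u : ℤ) * n - 1) / ((u : ℤ) - 1) := by
  have h1 : ((u : ℚ) * n - 1) / ((u : ℚ) - 1)
      = (((u : ℤ) * n - 1 : ℤ) : ℚ) / ((u - 1 : ℕ) : ℚ) := by
    have : ((u - 1 : ℕ) : ℚ) = (u : ℚ) - 1 := by
      have : (1 : ℕ) ≤ u := by omega
      push_cast [this]; ring
    rw [this]; push_cast; ring
  have h2 : ((u : ℤ) - 1) = ((u - 1 : ℕ) : ℤ) := by
    have : (1 : ℕ) ≤ u := by omega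
    push_cast [this]; ring
  rw [h1, Rat.floor_intCast_div_natCast, h2]

theorem floor_formula_gives_nonmultiples (u : ℕ) (hu : 2 ≤ u) :
    {m : ℤ | ∃ n : ℕ, 0 < n ∧ m = ⌊((u : ℚ) * n - 1) / ((u : ℚ) - 1)⌋} =
      {m : ℤ | 0 < m ∧ ¬ (u : ℤ) ∣ m} := by
  have hk : (0 : ℤ) < (u : ℤ) - 1 := by
    have : (2 : ℤ) ≤ (u : ℤ) := by exact_mod_cast hu
    omega
  ext m
  simp only [Set.mem_setOf_eq]
  constructor
  · rintro ⟨n, hn, rfl⟩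
    rw [floor_eq_ediv u hu n]
    set a : ℤ := ((n : ℤ) - 1) / ((u : ℤ) - 1) with ha
    set b : ℤ := ((n : ℤ) - 1) % ((u : ℤ) - 1) with hb
    have hb0 : 0 ≤ b := Int.emod_nonneg _ (by omega)
    have hb1 : b < (u : ℤ) - 1 := Int.emod_lt_of_pos _ hk
    have hab : (n : ℤ) - 1 = ((u : ℤ) - 1) * a + b := (Int.mul_ediv_add_emod _ _).symm
    have hn' : (1:ℤ) ≤ (n:ℤ) := by exact_mod_cast hn
    have ha0 : 0 ≤ a := Int.ediv_nonneg (by omega) (by omega)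
    have key : (u : ℤ) * n - 1 = ((n : ℤ) + a) * ((u : ℤ) - 1) + b := by ring_nf; linarith [hab]
    rw [key, ediv_helper _ _ _ hk hb0 hb1]
    have hval : (n : ℤ) + a = a * u + (b + 1) := by linarith [hab]
    constructor
    · have : (0 : ℤ) < n := by exact_mod_cast hn
      omega
    · intro hdvd
      have hdvd2 : (u : ℤ) ∣ b + 1 := by
        have : (u : ℤ) ∣ a * u := ⟨a, (mul_comm a (u:ℤ))⟩
        have := (Int.dvd_sub hdvd this)
        rwa [hval, add_sub_cancel_left] at this
      have := Int.le_of_dvd (by omega) hdvd2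
      omega
  · rintro ⟨hm0, hdvd⟩
    set a : ℤ := m / (u : ℤ) with ha
    set c : ℤ := m % (u : ℤ) with hc
    have hc0 : 0 ≤ c := Int.emod_nonneg _ (by omega)
    have hc1 : c < (u : ℤ) := Int.emod_lt_of_pos _ (by omega)
    have hcne : c ≠ 0 := by
      intro h
      exact hdvd (Int.dvd_of_emod_eq_zero (by rw [← hc, h]))
    have hmac : m = (u : ℤ) * a + c := (Int.mul_ediv_add_emod _ _).symm
    have ha0 : 0 ≤ a := Int.ediv_nonneg (le_of_lt hm0) (by omega)
    set N : ℤ := a * ((u : ℤ) - 1) + c with hN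
    have hN1 : 1 ≤ N := by nlinarith
    refine ⟨N.toNat, by omega, ?_⟩
    rw [floor_eq_ediv u hu]
    have hNc : ((N.toNat : ℕ) : ℤ) = N := Int.toNat_of_nonneg (by omega)
    rw [hNc]
    have key : (u : ℤ) * N - 1 = (N + a) * ((u : ℤ) - 1) + (c - 1) := by
      rw [hN]; ring
    rw [key, ediv_helper _ _ _ hk (by omega) (by omega), hmac, hN]; ring
end

section
/- For all positive integers s, p, and all integers n with 1 ≤ n ≤ s·p + 1, the number of multisets F contained in the multiset {1 repeated s times, …, n−1 repeated s times, n} such that n ∈ F and min F ≥ p·|F| equals the sum over k from 1 to ⌊(s·n+1)/(s·p+1)⌋ of the binomial coefficient C(n − p·k + k − 2, k − 1). -/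
/-!
A member `F` with `|F| = k` is `n` together with a multiset `G` of `k - 1` elements of
`[p k, n)`, because the ground multiset contains `n` only once; conversely, as long as `k ≤ s`,
every such `G` fits into the `s` available copies of each element. So the `k`-th fiber is in
bijection with `Sym [p k, n) (k - 1)` and has `C(n - p k + k - 2, k - 1)` elements. A nonempty
fiber has `k = 1` or `p k < n ≤ s p + 1`; either way `k ≤ s` and `k (s p + 1) ≤ s n + 1`, and
conversely every `k` in that range satisfies `k ≤ s` and `p k ≤ n`.
-/

/-- The collection of sub-multisets `F` of the multiset consisting of `s` copies of each of
`1, …, n-1` together with one copy of `n`, such that `n ∈ F` and `min F ≥ p * |F|`. -/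
def SchreierMultisets (s p n : ℕ) : Finset (Multiset ℕ) :=
  (((Finset.Ico 1 n).val.bind fun k => Multiset.replicate s k) + {n}).powerset.toFinset
    |>.filter fun F => n ∈ F ∧ ∀ x ∈ F, p * Multiset.card F ≤ x

open Multiset

theorem Finset.card_sym {α : Type*} [DecidableEq α] (t : Finset α) (j : ℕ) :
    (t.sym j).card = (t.card + j - 1).choose j := by
  conv_lhs => rw [← t.attach_map_val, Finset.sym_map, Finset.card_map, ← Finset.univ_eq_attach,
    Finset.sym_univ, Finset.card_univ, Sym.card_sym_eq_choose, Fintype.card_coe]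

def schreierGround (s n : ℕ) : Multiset ℕ :=
  ((Finset.Ico 1 n).val.bind fun k => replicate s k) + {n}

theorem count_schreierGround (s n x : ℕ) :
    count x (schreierGround s n) =
      (if 1 ≤ x ∧ x < n then s else 0) + if x = n then 1 else 0 := by
  simp [schreierGround, count_bind, count_replicate, count_singleton, Finset.mem_Ico]

section

variable {s p n : ℕ}

theorem mem_schreierMultisets_iff {F : Multiset ℕ} :
    F ∈ SchreierMultisets s p n ↔
      F ≤ schreierGround s n ∧ n ∈ F ∧ ∀ x ∈ F, p * card F ≤ x := by
  simp [SchreierMultisets, schreierGround]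

theorem exists_eq_cons_of_mem_schreierMultisets {F : Multiset ℕ}
    (hF : F ∈ SchreierMultisets s p n) :
    ∃ G, F = n ::ₘ G ∧ ∀ x ∈ G, x ∈ Finset.Ico (p * card F) n := by
  obtain ⟨hle, hnF, hmin⟩ := mem_schreierMultisets_iff.1 hF
  refine ⟨F.erase n, (cons_erase hnF).symm, fun x hx =>
    Finset.mem_Ico.2 ⟨hmin x (mem_of_mem_erase hx), ?_⟩⟩
  have hcount := count_le_of_le x hle
  have hsplit : count x F = count x (F.erase n) + if x = n then 1 else 0 := by
    conv_lhs => rw [← cons_erase hnF]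
    exact count_cons x n _
  have hpos := count_pos.2 hx
  rw [count_schreierGround] at hcount
  split_ifs at hcount hsplit <;> omega

theorem cons_mem_schreierMultisets {G : Multiset ℕ} (hp : 1 ≤ p) (hGs : card G < s)
    (hG : ∀ x ∈ G, x ∈ Finset.Ico (p * card (n ::ₘ G)) n)
    (hn : p * card (n ::ₘ G) ≤ n) :
    n ::ₘ G ∈ SchreierMultisets s p n := by
  refine mem_schreierMultisets_iff.2
    ⟨le_iff_count.2 fun x => ?_, mem_cons_self n G, fun x hx => ?_⟩
  · rw [count_cons, count_schreierGround]
    by_cases hx : x ∈ G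
    · have := count_le_card x G
      have := Finset.mem_Ico.1 (hG x hx)
      have : 0 < p * card (n ::ₘ G) := Nat.mul_pos hp (card_pos.2 cons_ne_zero)
      split_ifs <;> omega
    · rw [count_eq_zero.2 hx]
      split_ifs <;> omega
  · rcases mem_cons.1 hx with rfl | hx
    · exact hn
    · exact (Finset.mem_Ico.1 (hG x hx)).1

theorem filter_card_schreierMultisets_eq_image {k : ℕ} (hp : 1 ≤ p) (hk : 1 ≤ k)
    (hks : k ≤ s) (hkn : p * k ≤ n) :
    (SchreierMultisets s p n).filter (fun F => card F = k) =
      ((Finset.Ico (p * k) n).sym (k - 1)).image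
        fun G : Sym ℕ (k - 1) => n ::ₘ (G : Multiset ℕ) := by
  ext F
  simp only [Finset.mem_filter, Finset.mem_image, Finset.mem_sym_iff]
  constructor
  · rintro ⟨hF, rfl⟩
    obtain ⟨G, rfl, hG⟩ := exists_eq_cons_of_mem_schreierMultisets hF
    exact ⟨⟨G, by simp⟩, hG, rfl⟩
  · rintro ⟨G, hG, rfl⟩
    have hGcard : card (G : Multiset ℕ) = k - 1 := G.card_coe
    have hcard : card (n ::ₘ (G : Multiset ℕ)) = k := by
      rw [card_cons, hGcard]
      omega
    exact ⟨cons_mem_schreierMultisets hp (by omega) (by rwa [hcard]) (by rwa [hcard]), hcard⟩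

theorem card_filter_card_schreierMultisets {k : ℕ} (hp : 1 ≤ p) (hk : 1 ≤ k) (hks : k ≤ s)
    (hkn : p * k ≤ n) :
    ((SchreierMultisets s p n).filter (fun F => card F = k)).card =
      (n - p * k + k - 2).choose (k - 1) := by
  rw [filter_card_schreierMultisets_eq_image hp hk hks hkn, Finset.card_image_of_injective _
    fun G H h => Sym.coe_injective ((cons_inj_right n).1 h), Finset.card_sym, Nat.card_Ico]
  congr 1
  omega

theorem card_mem_Icc_of_mem_schreierMultisets (hp : 1 ≤ p) (hn : n ≤ s * p + 1)
    {F : Multiset ℕ} (hF : F ∈ SchreierMultisets s p n) :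
    card F ∈ Finset.Icc 1 ((s * n + 1) / (s * p + 1)) := by
  obtain ⟨G, rfl, hG⟩ := exists_eq_cons_of_mem_schreierMultisets hF
  have hpn : p * card (n ::ₘ G) ≤ n :=
    (mem_schreierMultisets_iff.1 hF).2.2 n (mem_cons_self n G)
  rw [Finset.mem_Icc, Nat.le_div_iff_mul_le (Nat.succ_pos _), card_cons]
  refine ⟨by omega, ?_⟩
  rcases G.empty_or_exists_mem with rfl | ⟨x, hx⟩
  · simp only [card_cons, card_zero, zero_add, mul_one, one_mul] at hpn ⊢
    nlinarith
  · have hlt := Finset.mem_Ico.1 (hG x hx)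
    rw [card_cons] at hlt
    have hks : card G + 1 ≤ s := Nat.le_of_mul_le_mul_left (by nlinarith) hp
    -- `k (s p + 1) = s (p k) + k ≤ s (n - 1) + s`
    nlinarith

end

theorem card_schreierMultisets_initial_general (s p n : ℕ) (hs : 1 ≤ s) (hp : 1 ≤ p)
    (hn2 : n ≤ s * p + 1) :
    (SchreierMultisets s p n).card =
      ∑ k ∈ Finset.Icc 1 ((s * n + 1) / (s * p + 1)), (n - p * k + k - 2).choose (k - 1) := by
  rw [Finset.card_eq_sum_card_fiberwise
    fun F hF => card_mem_Icc_of_mem_schreierMultisets hp hn2 hF]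
  refine Finset.sum_congr rfl fun k hk => ?_
  obtain ⟨hk1, hkM⟩ := Finset.mem_Icc.1 hk
  have hk : k * (s * p + 1) ≤ s * n + 1 := (Nat.le_div_iff_mul_le (Nat.succ_pos _)).1 hkM
  have hks : k ≤ s := by nlinarith
  have hkn : p * k ≤ n := by nlinarith
  exact card_filter_card_schreierMultisets hp hk1 hks hkn

theorem card_schreierMultisets_initial (s p n : ℕ) (hs : 1 ≤ s) (hp : 1 ≤ p)
    (hn1 : 1 ≤ n) (hn2 : n ≤ s * p + 1) :
    (SchreierMultisets s p n).card =
      ∑ k ∈ Finset.Icc 1 ((s * n + 1) / (s * p + 1)), (n - p * k + k - 2).choose (k - 1) :=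
  card_schreierMultisets_initial_general s p n hs hp hn2
end

section
/- For all positive integers s, p and every integer n ≥ s·p + 2, the number |A^(s)_{p,n}| satisfies the linear recurrence |A^(s)_{p,n}| = Σ_{i=0}^{s} |A^(s)_{p, n−1−i·p}|. -/
open Multiset

theorem Multiset.filter_lt_add_replicate_count {α : Type*} [LinearOrder α] {a : α}
    {F : Multiset α} (h : ∀ x ∈ F, a ≤ x) :
    F.filter (a < ·) + replicate (count a F) a = F := by
  conv_rhs => rw [← F.filter_add_not (a < ·)]
  rw [← filter_eq']
  congr 1
  exact filter_congr fun x hx => by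
    rw [not_lt]
    exact ⟨fun e => e ▸ le_rfl, fun hle => le_antisymm hle (h x hx)⟩

namespace SchreierMultisets

variable {s p n : ℕ}

theorem le_ambient_iff {F : Multiset ℕ} :
    F ≤ ((Finset.Ico 1 n).val.bind fun k => replicate s k) + {n} ↔
      count n F ≤ 1 ∧ ∀ x ∈ F, x ≠ n → 1 ≤ x ∧ x < n ∧ count x F ≤ s := by
  have count_ambient (x : ℕ) :
      count x (((Finset.Ico 1 n).val.bind fun k => replicate s k) + {n}) =
        (if 1 ≤ x ∧ x < n then s else 0) + if x = n then 1 else 0 := by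
    rw [count_add, count_bind, count_singleton, ← Finset.sum_eq_multiset_sum]
    simp [count_replicate, Finset.sum_ite_eq', Finset.mem_Ico]
  simp only [le_iff_count, count_ambient]
  refine ⟨fun h => ⟨by simpa using h n, fun x hx hxn => ?_⟩, fun ⟨hn, h⟩ x => ?_⟩
  · have hle := h x
    have hpos := count_pos.2 hx
    split_ifs at hle <;> omega
  · by_cases hxn : x = n
    · subst hxn
      simpa using hn
    by_cases hx : x ∈ F
    · have := h x hx hxn
      split_ifs <;> omega
    · simp [count_eq_zero.2 hx]

theorem mem_iff {F : Multiset ℕ} :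
    F ∈ SchreierMultisets s p n ↔
      (count n F ≤ 1 ∧ ∀ x ∈ F, x ≠ n → 1 ≤ x ∧ x < n ∧ count x F ≤ s) ∧
        n ∈ F ∧ ∀ x ∈ F, p * card F ≤ x := by
  rw [SchreierMultisets, Finset.mem_filter, mem_toFinset, mem_powerset, le_ambient_iff]

theorem mul_card_lt (hpn : p < n) {F : Multiset ℕ} (hF : F ∈ SchreierMultisets s p n) :
    p * card F < n := by
  obtain ⟨⟨hcount, hbound⟩, hn, hmin⟩ := mem_iff.1 hF
  refine (hmin n hn).lt_of_ne fun h => ?_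
  have hall : ∀ x ∈ F, n = x := fun x hx => by
    by_contra hxn
    have := (hbound x hx (Ne.symm hxn)).2.1
    have := hmin x hx
    omega
  have hpos := card_pos_iff_exists_mem.2 ⟨n, hn⟩
  rw [count_eq_card.2 hall] at hcount
  rw [show card F = 1 by omega, mul_one] at h
  omega

def expand (p i : ℕ) (G : Multiset ℕ) : Multiset ℕ :=
  G.map (· + (i * p + 1)) + replicate i (p * (card G + i))

def contract (p : ℕ) (F : Multiset ℕ) : Multiset ℕ :=
  (F.filter (p * card F < ·)).map (· - (count (p * card F) F * p + 1))

variable {i : ℕ} {G : Multiset ℕ}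

@[simp]
theorem card_expand : card (expand p i G) = card G + i := by
  simp [expand]

theorem mul_card_add_lt {y : ℕ} (hy : p * card G ≤ y) : p * (card G + i) < y + (i * p + 1) := by
  rw [mul_add, mul_comm p i]
  omega

theorem count_expand_add {y : ℕ} (hy : p * card G ≤ y) :
    count (y + (i * p + 1)) (expand p i G) = count y G := by
  rw [expand, count_add, count_map_eq_count' _ _ (add_left_injective _), count_replicate,
    if_neg (mul_card_add_lt hy).ne, add_zero]

theorem count_expand_mul_card_add (hG : ∀ y ∈ G, p * card G ≤ y) :
    count (p * (card G + i)) (expand p i G) = i := by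
  rw [expand, count_add, count_replicate_self, count_eq_zero.2, zero_add]
  rintro hm
  obtain ⟨y, hy, h⟩ := mem_map.1 hm
  exact (mul_card_add_lt (hG y hy)).ne' h

theorem contract_expand (hG : ∀ y ∈ G, p * card G ≤ y) : contract p (expand p i G) = G := by
  have hshift :
      (G.map (· + (i * p + 1))).filter (p * (card G + i) < ·) = G.map (· + (i * p + 1)) :=
    filter_eq_self.2 fun x hx => by
      obtain ⟨y, hy, rfl⟩ := mem_map.1 hx
      exact mul_card_add_lt (hG y hy)
  rw [contract, card_expand, count_expand_mul_card_add hG, expand, filter_add, hshift,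
    filter_eq_nil.2 fun x hx => (eq_of_mem_replicate hx ▸ lt_irrefl _), add_zero, map_map]
  simp

theorem card_contract_add_count {F : Multiset ℕ} (hF : ∀ x ∈ F, p * card F ≤ x) :
    card (contract p F) + count (p * card F) F = card F := by
  conv_rhs => rw [← filter_lt_add_replicate_count hF]
  simp [contract]

theorem expand_contract {F : Multiset ℕ} (hF : ∀ x ∈ F, p * card F ≤ x) :
    expand p (count (p * card F) F) (contract p F) = F := by
  have hsplit := filter_lt_add_replicate_count hF
  set i := count (p * card F) F with hi
  have hcard := card_contract_add_count hF
  have hip : i * p ≤ p * card F := by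
    rw [mul_comm]
    exact Nat.mul_le_mul_left p (count_le_card _ _)
  rw [expand, hcard, contract, ← hi, map_map]
  conv_rhs => rw [← hsplit]
  congr 1
  refine (map_congr rfl fun x hx => ?_).trans (map_id _)
  have := (mem_filter.1 hx).2
  simp only [Function.comp_apply, id]
  omega

theorem mul_card_contract_add_count_mul {F : Multiset ℕ} (hF : ∀ x ∈ F, p * card F ≤ x) :
    p * card (contract p F) + count (p * card F) F * p = p * card F := by
  rw [mul_comm (count _ _) p, ← mul_add, card_contract_add_count hF]

theorem mul_card_contract_le {F : Multiset ℕ} (hF : ∀ x ∈ F, p * card F ≤ x) :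
    ∀ y ∈ contract p F, p * card (contract p F) ≤ y := by
  intro y hy
  obtain ⟨x, hx, rfl⟩ := mem_map.1 hy
  have hlt := (mem_filter.1 hx).2
  have := mul_card_contract_add_count_mul hF
  omega

theorem expand_mem_iff (hp : 1 ≤ p) (hG : ∀ y ∈ G, p * card G ≤ y)
    (hGn : p * card G ≤ n) :
    expand p i G ∈ SchreierMultisets s p (n + i * p + 1) ↔
      i ≤ s ∧ G ∈ SchreierMultisets s p n := by
  have hfloor : p * (card G + i) = p * card G + i * p := by ring
  have hshift (y : ℕ) (hy : y ∈ G) : y + (i * p + 1) ∈ expand p i G :=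
    mem_add.2 (Or.inl (mem_map_of_mem _ hy))
  have hcount_top : count (n + i * p + 1) (expand p i G) = count n G := count_expand_add hGn
  simp only [mem_iff, card_expand, hcount_top]
  constructor
  · rintro ⟨⟨hcount, hbound⟩, hN, -⟩
    refine ⟨?_, ⟨hcount, fun y hy hyn => ?_⟩, ?_, hG⟩
    · rcases i.eq_zero_or_pos with hi | hi
      · omega
      have := (hbound _ (mem_add.2 (Or.inr (mem_replicate.2 ⟨hi.ne', rfl⟩))) (by omega)).2.2
      rwa [count_expand_mul_card_add hG] at this
    · have := hbound _ (hshift y hy) (by omega)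
      rw [count_expand_add (hG y hy)] at this
      have := Nat.mul_le_mul hp (card_pos_iff_exists_mem.2 ⟨y, hy⟩)
      have := hG y hy
      omega
    · rcases mem_add.1 hN with hN | hN
      · obtain ⟨y, hy, hyN⟩ := mem_map.1 hN
        rwa [show n = y by omega]
      · have := eq_of_mem_replicate hN
        omega
  · rintro ⟨hi, ⟨hcount, hbound⟩, hn, -⟩
    refine ⟨⟨hcount, fun x hx hxN => ?_⟩, hshift n hn, fun x hx => ?_⟩
    · rcases mem_add.1 hx with hx | hx
      · obtain ⟨y, hy, rfl⟩ := mem_map.1 hx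
        have := hbound y hy (by omega)
        rw [count_expand_add (hG y hy)]
        omega
      · rw [eq_of_mem_replicate hx, count_expand_mul_card_add hG]
        have := Nat.mul_le_mul hp (card_pos_iff_exists_mem.2 ⟨n, hn⟩)
        omega
    · rcases mem_add.1 hx with hx | hx
      · obtain ⟨y, hy, rfl⟩ := mem_map.1 hx
        exact (mul_card_add_lt (hG y hy)).le
      · exact (eq_of_mem_replicate hx).ge

theorem expand_mem (hp : 1 ≤ p) (hi : i ≤ s) (hin : i * p < n)
    (hG : G ∈ SchreierMultisets s p (n - 1 - i * p)) :
    expand p i G ∈ SchreierMultisets s p n := by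
  obtain ⟨-, hn, hmin⟩ := mem_iff.1 hG
  have := (expand_mem_iff hp hmin (hmin _ hn)).2 ⟨hi, hG⟩
  rwa [show n - 1 - i * p + i * p + 1 = n by omega] at this

theorem contract_mem (hp : 1 ≤ p) (hpn : p < n) {F : Multiset ℕ}
    (hF : F ∈ SchreierMultisets s p n) :
    count (p * card F) F ≤ s ∧
      contract p F ∈ SchreierMultisets s p (n - 1 - count (p * card F) F * p) := by
  have hmin := (mem_iff.1 hF).2.2
  have hlt := mul_card_lt hpn hF
  have hcard := mul_card_contract_add_count_mul hmin
  rw [← expand_contract hmin,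
    show n = n - 1 - count (p * card F) F * p + count (p * card F) F * p + 1 by omega] at hF
  exact (expand_mem_iff hp (mul_card_contract_le hmin) (by omega)).1 hF

end SchreierMultisets

open SchreierMultisets in
theorem card_schreierMultisets_recurrence (s p n : ℕ) (hs : 1 ≤ s) (hp : 1 ≤ p)
    (hn : s * p + 2 ≤ n) :
    (SchreierMultisets s p n).card =
      ∑ i ∈ Finset.range (s + 1), (SchreierMultisets s p (n - 1 - i * p)).card := by
  have hpn : p < n := by nlinarith
  rw [← Finset.card_sigma]
  refine Finset.card_nbij' (fun F => ⟨count (p * card F) F, contract p F⟩)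
    (fun iG => expand p iG.1 iG.2) (fun F hF => ?_) (fun iG hiG => ?_)
    (fun F hF => expand_contract (mem_iff.1 hF).2.2) (fun iG hiG => ?_)
  · obtain ⟨hi, hG⟩ := contract_mem hp hpn hF
    exact Finset.mem_sigma.2 ⟨Finset.mem_range.2 (Nat.lt_succ_of_le hi), hG⟩
  · obtain ⟨hi, hG⟩ := Finset.mem_sigma.1 hiG
    rw [Finset.mem_range] at hi
    exact expand_mem hp (by omega) (by nlinarith) hG
  · have hmin := (mem_iff.1 (Finset.mem_sigma.1 hiG).2).2.2
    simp [count_expand_mul_card_add hmin, contract_expand hmin]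
end

section
/- For all positive integers s, p and all integers n with 1 ≤ n ≤ s·p + 1, the number of subsets F of the colored set {1₁,…,1_s, …, (n−1)₁,…,(n−1)_s, n} with n ∈ F and min F ≥ p·|F| (where min is taken on numerical values) equals Σ_{k=1}^{⌊(ns+1)/(ps+1)⌋} C((n − k·p)·s, k − 1). -/
/-- The collection of subsets `F` of the colored set consisting of the `s` colored copies
`(j, c)` (value `j`, color `c ∈ {1, …, s}`) of each `j ∈ {1, …, n-1}` together with `(n, 1)`,
such that `(n,1) ∈ F` and the minimal numerical value of `F` is at least `p * |F|`. -/
def ColoredSchreier (s p n : ℕ) : Finset (Finset (ℕ × ℕ)) :=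
  (((Finset.Ico 1 n) ×ˢ (Finset.Icc 1 s)) ∪ {(n, 1)}).powerset.filter
    fun F => (n, 1) ∈ F ∧ ∀ x ∈ F, p * F.card ≤ x.1

/-!
Sort the sets by cardinality. A set `F` of cardinality `k` is `(n, 1)` together with `k - 1`
further elements, and the condition `min F ≥ p k` says exactly that these lie among the
`(n - p k) s` colored elements of value in `[p k, n)`; so there are `C((n - p k) s, k - 1)` of
them. Such sets exist only if `k - 1 ≤ (n - p k) s`, i.e. `k (p s + 1) ≤ n s + 1`, which gives
the range of summation.
-/

open Finset

lemma card_image_insert_powersetCard {α : Type*} [DecidableEq α] {a : α} {B : Finset α}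
    (ha : a ∉ B) (k : ℕ) : #((B.powersetCard k).image (insert a)) = (#B).choose k := by
  rw [card_image_of_injOn, card_powersetCard]
  exact insert_erase_invOn.2.injOn.mono fun G hG => notMem_mono (mem_powersetCard.1 hG).1 ha

section Arithmetic

variable {s p n k : ℕ}

lemma le_div_mul_add_one_of_sub_one_le (hpk : p * k ≤ n) (hk : k - 1 ≤ (n - p * k) * s) :
    k ≤ (n * s + 1) / (p * s + 1) := by
  rw [Nat.le_div_iff_mul_le (Nat.succ_pos _), Nat.mul_succ, mul_left_comm, ← mul_assoc]
  have : p * k * s ≤ n * s := Nat.mul_le_mul_right s hpk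
  rw [Nat.sub_mul] at hk
  omega

lemma mul_le_of_le_div_mul_add_one (hs : 0 < s) (hk : k ≤ (n * s + 1) / (p * s + 1)) :
    p * k ≤ n := by
  rw [Nat.le_div_iff_mul_le (Nat.succ_pos _), Nat.mul_succ, mul_left_comm, ← mul_assoc] at hk
  obtain rfl | hk0 := k.eq_zero_or_pos
  · simp
  exact Nat.le_of_mul_le_mul_right (by omega : p * k * s ≤ n * s) hs

end Arithmetic

section ColoredSchreier

variable {s p n : ℕ} {F : Finset (ℕ × ℕ)}

lemma erase_subset_of_mem_coloredSchreier (hF : F ∈ ColoredSchreier s p n) :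
    F.erase (n, 1) ⊆ Ico (p * #F) n ×ˢ Icc 1 s := by
  intro x hx
  obtain ⟨hxn, hxF⟩ := mem_erase.1 hx
  obtain ⟨hFsub, -, hmin⟩ := mem_filter.1 hF
  have hx' := mem_powerset.1 hFsub hxF
  simp only [mem_union, mem_product, mem_Ico, mem_Icc, mem_singleton, hxn, or_false] at hx'
  simp only [mem_product, mem_Ico, mem_Icc]
  exact ⟨⟨hmin x hxF, hx'.1.2⟩, hx'.2⟩

lemma mem_coloredSchreier (hp : 1 ≤ p) :
    F ∈ ColoredSchreier s p n ↔
      (n, 1) ∈ F ∧ p * #F ≤ n ∧ F.erase (n, 1) ⊆ Ico (p * #F) n ×ˢ Icc 1 s := by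
  refine ⟨fun hF => ?_, fun ⟨hn, hpF, hsub⟩ => ?_⟩
  · have hn := (mem_filter.1 hF).2.1
    exact ⟨hn, (mem_filter.1 hF).2.2 _ hn, erase_subset_of_mem_coloredSchreier hF⟩
  have hpF1 : 1 * 1 ≤ p * #F := Nat.mul_le_mul hp (card_pos.2 ⟨_, hn⟩)
  have hF : F ⊆ insert (n, 1) (Ico (p * #F) n ×ˢ Icc 1 s) :=
    calc F = insert (n, 1) (F.erase (n, 1)) := (insert_erase hn).symm
      _ ⊆ _ := insert_subset_insert _ hsub
  refine mem_filter.2 ⟨mem_powerset.2 (hF.trans ?_), hn, fun x hx => ?_⟩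
  · rw [insert_eq, union_comm]
    exact union_subset_union (product_subset_product_left (Ico_subset_Ico_left hpF1)) le_rfl
  · rcases mem_insert.1 (hF hx) with rfl | hx
    · exact hpF
    · exact (mem_Ico.1 (mem_product.1 hx).1).1

lemma card_mem_Icc_of_mem_coloredSchreier (hF : F ∈ ColoredSchreier s p n) :
    #F ∈ Icc 1 ((n * s + 1) / (p * s + 1)) := by
  have hn := (mem_filter.1 hF).2.1
  have hpF := (mem_filter.1 hF).2.2 _ hn
  have hsub := erase_subset_of_mem_coloredSchreier hF
  refine mem_Icc.2 ⟨card_pos.2 ⟨_, hn⟩, le_div_mul_add_one_of_sub_one_le hpF ?_⟩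
  simpa [card_erase_of_mem hn] using card_le_card hsub

lemma filter_card_coloredSchreier_eq (hp : 1 ≤ p) {k : ℕ} (hk : 1 ≤ k) (hpk : p * k ≤ n) :
    {F ∈ ColoredSchreier s p n | #F = k} =
      ((Ico (p * k) n ×ˢ Icc 1 s).powersetCard (k - 1)).image (insert (n, 1)) := by
  ext F
  simp only [mem_filter, mem_image, mem_powersetCard, mem_coloredSchreier hp]
  constructor
  · rintro ⟨⟨hn, -, hsub⟩, rfl⟩
    exact ⟨F.erase (n, 1), ⟨hsub, card_erase_of_mem hn⟩, insert_erase hn⟩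
  · rintro ⟨G, ⟨hG, hGk⟩, rfl⟩
    have hnG : ((n, 1) : ℕ × ℕ) ∉ G := fun h => by simpa using hG h
    have hcard : #(insert ((n, 1) : ℕ × ℕ) G) = k := by
      rw [card_insert_of_notMem hnG, hGk]; omega
    rw [hcard, erase_insert hnG]
    exact ⟨⟨mem_insert_self _ _, hpk, hG⟩, rfl⟩

end ColoredSchreier

theorem card_coloredSchreier_initial_general (s p n : ℕ) (hs : 1 ≤ s) (hp : 1 ≤ p) :
    (ColoredSchreier s p n).card =
      ∑ k ∈ Finset.Icc 1 ((n * s + 1) / (p * s + 1)), ((n - k * p) * s).choose (k - 1) := by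
  rw [card_eq_sum_card_fiberwise fun F => card_mem_Icc_of_mem_coloredSchreier]
  refine sum_congr rfl fun k hk => ?_
  obtain ⟨hk1, hkM⟩ := mem_Icc.1 hk
  have hnotin : ((n, 1) : ℕ × ℕ) ∉ Ico (p * k) n ×ˢ Icc 1 s := by simp
  rw [filter_card_coloredSchreier_eq hp hk1 (mul_le_of_le_div_mul_add_one hs hkM),
    card_image_insert_powersetCard hnotin, card_product, Nat.card_Ico, Nat.card_Icc,
    Nat.add_sub_cancel, mul_comm k]

theorem card_coloredSchreier_initial (s p n : ℕ) (hs : 1 ≤ s) (hp : 1 ≤ p)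
    (hn1 : 1 ≤ n) (hn2 : n ≤ s * p + 1) :
    (ColoredSchreier s p n).card =
      ∑ k ∈ Finset.Icc 1 ((n * s + 1) / (p * s + 1)), ((n - k * p) * s).choose (k - 1) :=
  card_coloredSchreier_initial_general s p n hs hp
end

section
/- Define the sequence b^(s)_{p,n} by b^(s)_{p,n} = 0 for 1 ≤ n ≤ (p−1)s, b^(s)_{p,n} = 1 for (p−1)s + 1 ≤ n ≤ ps + 1, and b^(s)_{p,n} = b^(s)_{p,n−1} + b^(s)_{p,n−1−ps} for n ≥ ps + 2. Then for all positive integers s, p, n, b^(s)_{p,n} = Σ_{i=0}^{⌊(n − s(p−1) − 1)/(sp+1)⌋} C(n − s(p−1) − 1 − s·p·i, i), where an empty sum (when the upper limit is negative) is 0. -/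
/-!
Put `m = n - (p-1)s - 1` and `B = ps`. In the variable `m` the recursion becomes
`b(m) = b(m-1) + b(m-1-B)` with `b(m) = 1` for `0 ≤ m ≤ B`, and the diagonal binomial sums
`f(m) = ∑ᵢ C(m - Bi, i)` obey the same recursion by Pascal's rule applied termwise,
`C(m - Bi, i) = C(m - 1 - Bi, i) + C((m - 1 - B) - B(i-1), i-1)`.
Since `C(m - Bi, i) = 0` once `(B+1)i > m`, the sum may run over any range `i < N` with
`N > ⌊m/(B+1)⌋`, which is what lets the three sums of the recursion be compared.
-/

/-- The parent sequence: `bseq s p n = 0` for `n ≤ (p-1)s`, `bseq s p n = 1` for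
`(p-1)s + 1 ≤ n ≤ ps + 1`, and `bseq s p n = bseq s p (n-1) + bseq s p (n-1-ps)` for
`n ≥ ps + 2`. -/
def bseq (s p : ℕ) : ℕ → ℕ
  | n =>
    if _h : n ≤ p * s + 1 then (if n ≤ (p - 1) * s then 0 else 1)
    else bseq s p (n - 1) + bseq s p (n - 1 - p * s)
  termination_by n => n
  decreasing_by all_goals omega

open Finset

theorem choose_sub_mul_eq_zero {B m i : ℕ} (h : m < (B + 1) * i) : (m - B * i).choose i = 0 := by
  have hi : i ≠ 0 := by rintro rfl; simp at h
  rw [add_mul, one_mul] at h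
  exact Nat.choose_eq_zero_of_lt (by omega)

theorem sum_range_choose_sub_mul_eq {B m N : ℕ} (hN : m / (B + 1) < N) :
    ∑ i ∈ range N, (m - B * i).choose i =
      ∑ i ∈ range (m / (B + 1) + 1), (m - B * i).choose i := by
  refine (sum_subset (range_subset_range.2 hN) fun i _ hi => choose_sub_mul_eq_zero ?_).symm
  rw [mem_range, not_lt, Nat.add_one_le_iff, Nat.div_lt_iff_lt_mul (Nat.succ_pos B)] at hi
  rwa [mul_comm]

theorem sum_range_choose_sub_mul_of_lt {B m N : ℕ} (hN : m < N) :
    ∑ i ∈ range N, (m - B * i).choose i = ∑ i ∈ range (m + 1), (m - B * i).choose i := by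
  have hm : m / (B + 1) < m + 1 := Nat.lt_succ_of_le (Nat.div_le_self _ _)
  rw [sum_range_choose_sub_mul_eq (hm.trans_le hN), sum_range_choose_sub_mul_eq hm]

-- Pascal's rule, valid also when `B * i > k`: then `i ≠ 0` and both sides vanish.
theorem choose_succ_sub_mul_succ (B k i : ℕ) :
    (k + 1 - B * i).choose (i + 1) = (k - B * i).choose i + (k - B * i).choose (i + 1) := by
  by_cases h : B * i ≤ k
  · rw [show k + 1 - B * i = k - B * i + 1 by omega, Nat.choose_succ_succ']
  · obtain ⟨j, rfl⟩ : ∃ j, i = j + 1 :=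
      Nat.exists_eq_add_one.2 (Nat.pos_of_ne_zero (by rintro rfl; simp at h))
    simp [show k + 1 - B * (j + 1) = 0 by omega, show k - B * (j + 1) = 0 by omega]

theorem sum_range_succ_choose_sub_mul (B k N : ℕ) :
    ∑ i ∈ range (N + 1), (k + B + 1 - B * i).choose i =
      ∑ i ∈ range (N + 1), (k + B - B * i).choose i +
        ∑ i ∈ range N, (k - B * i).choose i := by
  have shift₁ : ∀ i, k + B + 1 - B * (i + 1) = k + 1 - B * i := fun i => by rw [mul_add]; omega
  have shift₂ : ∀ i, k + B - B * (i + 1) = k - B * i := fun i => by rw [mul_add]; omega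
  simp only [sum_range_succ' _ N, shift₁, shift₂, choose_succ_sub_mul_succ, sum_add_distrib,
    Nat.choose_zero_right]
  ring

section Bseq

variable {s p : ℕ}

theorem bseq_of_le {n : ℕ} (hn : n ≤ (p - 1) * s) : bseq s p n = 0 := by
  have : (p - 1) * s ≤ p * s := Nat.mul_le_mul_right s (Nat.sub_le p 1)
  rw [bseq, dif_pos (by omega), if_pos hn]

theorem bseq_of_lt_of_le {n : ℕ} (h₁ : (p - 1) * s < n) (h₂ : n ≤ p * s + 1) :
    bseq s p n = 1 := by
  rw [bseq, dif_pos h₂, if_neg (by omega)]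

theorem bseq_of_lt {n : ℕ} (hn : p * s + 1 < n) :
    bseq s p n = bseq s p (n - 1) + bseq s p (n - 1 - p * s) := by
  rw [bseq, dif_neg (by omega)]

theorem bseq_eq_one {n : ℕ} (h₁ : (p - 1) * s < n) (h₂ : n ≤ (p - 1) * s + p * s + 1) :
    bseq s p n = 1 := by
  induction n with
  | zero => omega
  | succ n ih =>
    rcases le_or_gt (n + 1) (p * s + 1) with hn | hn
    · exact bseq_of_lt_of_le h₁ hn
    · have : (p - 1) * s ≤ p * s := Nat.mul_le_mul_right s (Nat.sub_le p 1)
      rw [bseq_of_lt hn, Nat.add_sub_cancel, ih (by omega) (by omega), bseq_of_le (by omega)]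

theorem bseq_add_pred_mul_add_one (m : ℕ) :
    bseq s p (m + (p - 1) * s + 1) = ∑ i ∈ range (m + 1), (m - p * s * i).choose i := by
  induction m using Nat.strong_induction_on with
  | _ m ih =>
    rcases le_or_gt m (p * s) with hm | hm
    · rw [bseq_eq_one (by omega) (by omega),
        sum_range_choose_sub_mul_eq (Nat.lt_succ_of_le (Nat.div_le_self _ _)),
        Nat.div_eq_of_lt (by omega), sum_range_one, Nat.mul_zero, Nat.sub_zero,
        Nat.choose_zero_right]
    · obtain ⟨k, rfl⟩ : ∃ k, m = k + p * s + 1 := ⟨m - p * s - 1, by omega⟩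
      have h₁ : k + p * s + 1 + (p - 1) * s + 1 - 1 - p * s = k + (p - 1) * s + 1 := by omega
      have h₂ : k + p * s + 1 + (p - 1) * s + 1 - 1 = (k + p * s) + (p - 1) * s + 1 := by omega
      rw [bseq_of_lt (by omega), h₁, h₂, ih _ (by omega), ih _ (by omega),
        sum_range_succ_choose_sub_mul, sum_range_choose_sub_mul_of_lt (N := k + p * s + 1 + 1)
        (by omega), sum_range_choose_sub_mul_of_lt (N := k + p * s + 1) (m := k) (by omega)]

end Bseq

theorem bseq_formula_general (s p n : ℕ) (hp : 1 ≤ p) :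
    bseq s p n =
      ∑ i ∈ Finset.range ((((n : ℤ) - s * (p - 1) - 1) / (s * p + 1) + 1).toNat),
        (n - s * (p - 1) - 1 - s * p * i).choose i := by
  -- the integer `p - 1` is untruncated; `hp` makes it the natural `p - 1` used by `bseq`
  have hc : (s : ℤ) * (p - 1) = ((p - 1) * s : ℕ) := by push_cast [Nat.cast_sub hp]; ring
  have hq : (s : ℤ) * p + 1 = (p * s + 1 : ℕ) := by push_cast; ring
  rw [hc, hq, mul_comm s, mul_comm s]
  rcases le_or_gt n ((p - 1) * s) with hn | hn
  · have hneg : ((n : ℤ) - ((p - 1) * s : ℕ) - 1) / (p * s + 1 : ℕ) < 0 :=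
      Int.ediv_neg_of_neg_of_pos (by omega) (by omega)
    rw [bseq_of_le hn, Int.toNat_of_nonpos (by omega), range_zero, sum_empty]
  · obtain ⟨m, rfl⟩ : ∃ m, n = m + (p - 1) * s + 1 := ⟨n - (p - 1) * s - 1, by omega⟩
    have hm : ((m + (p - 1) * s + 1 : ℕ) : ℤ) - ((p - 1) * s : ℕ) - 1 = m := by
      push_cast; ring
    rw [hm, ← Int.natCast_ediv, ← Nat.cast_add_one, Int.toNat_natCast,
      bseq_add_pred_mul_add_one,
      sum_range_choose_sub_mul_eq (Nat.lt_succ_of_le (Nat.div_le_self _ _)),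
      show m + (p - 1) * s + 1 - (p - 1) * s - 1 = m by omega]

theorem bseq_formula (s p n : ℕ) (hs : 1 ≤ s) (hp : 1 ≤ p) (hn : 1 ≤ n) :
    bseq s p n =
      ∑ i ∈ Finset.range ((((n : ℤ) - s * (p - 1) - 1) / (s * p + 1) + 1).toNat),
        (n - s * (p - 1) - 1 - s * p * i).choose i :=
  bseq_formula_general s p n hp
end

section
/- With b^(s)_{p,n} defined by b^(s)_{p,n} = 0 for 1 ≤ n ≤ (p−1)s, b^(s)_{p,n} = 1 for (p−1)s + 1 ≤ n ≤ ps + 1, and b^(s)_{p,n} = b^(s)_{p,n−1} + b^(s)_{p,n−1−ps} for n ≥ ps + 2, one has |B^(s)_{p,n}| = b^(s)_{p, ns − s + 1} for all positive integers n; i.e., the colored Schreier counting sequence is the arithmetic-progression subsequence of indices s·n − s + 1 of the parent sequence. -/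
/-- The summand of the closed-form binomial sum for `bseq`. -/
def bterm (s p m k : ℕ) : ℕ :=
  if (p - 1) * s + 1 + p * s * k ≤ m then (m - ((p - 1) * s + 1) - p * s * k).choose k else 0

lemma bterm_eq_zero {s p m k : ℕ} (hps : 0 < p * s) (h : m ≤ k) : bterm s p m k = 0 := by
  have hk : k ≤ p * s * k := Nat.le_mul_of_pos_left k hps
  unfold bterm
  rw [if_neg (by omega)]

lemma bterm_rec (s p m k : ℕ) (hs : 1 ≤ s) (hp : 1 ≤ p) (hm : p * s + 2 ≤ m) :
    bterm s p m k
      = bterm s p (m - 1) k + (if k = 0 then 0 else bterm s p (m - 1 - p * s) (k - 1)) := by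
  have hBA : (p - 1) * s + s = p * s := by
    have hpp : p - 1 + 1 = p := by omega
    calc (p - 1) * s + s = (p - 1 + 1) * s := by ring
      _ = p * s := by rw [hpp]
  rcases Nat.eq_zero_or_pos k with rfl | hk
  · simp only [↓reduceIte, Nat.add_zero]
    unfold bterm
    have hz : p * s * 0 = 0 := Nat.mul_zero _
    rw [if_pos (by omega), if_pos (by omega), Nat.choose_zero_right, Nat.choose_zero_right]
  · obtain ⟨j, rfl⟩ : ∃ j, k = j + 1 := ⟨k - 1, by omega⟩
    rw [if_neg (Nat.succ_ne_zero j), Nat.add_sub_cancel]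
    have hsplit : p * s * (j + 1) = p * s * j + p * s := by ring
    unfold bterm
    by_cases hg1 : (p - 1) * s + 1 + p * s * (j + 1) ≤ m - 1
    · rw [if_pos (by omega), if_pos hg1, if_pos (by omega)]
      have e1 : m - ((p - 1) * s + 1) - p * s * (j + 1)
          = (m - 1 - ((p - 1) * s + 1) - p * s * (j + 1)) + 1 := by omega
      have e2 : m - 1 - p * s - ((p - 1) * s + 1) - p * s * j
          = m - 1 - ((p - 1) * s + 1) - p * s * (j + 1) := by omega
      rw [e1, e2, Nat.choose_succ_succ]
      simp only [Nat.succ_eq_add_one]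
      omega
    · by_cases hg0 : (p - 1) * s + 1 + p * s * (j + 1) ≤ m
      · rw [if_pos hg0, if_neg hg1, if_neg (by omega)]
        have hz : m - ((p - 1) * s + 1) - p * s * (j + 1) = 0 := by omega
        rw [hz, Nat.choose_eq_zero_of_lt (Nat.succ_pos j)]
      · rw [if_neg hg0, if_neg hg1, if_neg (by omega)]

lemma bseq_eq_sum (s p : ℕ) (hs : 1 ≤ s) (hp : 1 ≤ p) (m : ℕ) :
    bseq s p m = ∑ k ∈ Finset.range (m + 1), bterm s p m k := by
  have hps : 0 < p * s := Nat.mul_pos hp hs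
  have hBA : (p - 1) * s + s = p * s := by
    have hpp : p - 1 + 1 = p := by omega
    calc (p - 1) * s + s = (p - 1 + 1) * s := by ring
      _ = p * s := by rw [hpp]
  induction m using Nat.strong_induction_on with
  | _ m ih =>
    rw [bseq]
    split_ifs with h1 h2
    · symm
      apply Finset.sum_eq_zero
      intro k _
      unfold bterm
      split_ifs with hg
      · exfalso; omega
      · rfl
    · have hside : ∀ b ∈ Finset.range (m + 1), b ≠ 0 → bterm s p m b = 0 := by
        intro b _ hb
        have hbs : p * s ≤ p * s * b := Nat.le_mul_of_pos_right (p * s) (by omega)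
        unfold bterm
        split_ifs with hg
        · have ht : m - ((p - 1) * s + 1) - p * s * b = 0 := by omega
          rw [ht]
          exact Nat.choose_eq_zero_of_lt (by omega)
        · rfl
      rw [Finset.sum_eq_single_of_mem 0 (Finset.mem_range.2 (Nat.succ_pos m)) hside]
      unfold bterm
      have hz : p * s * 0 = 0 := Nat.mul_zero _
      rw [if_pos (by omega), Nat.choose_zero_right]
    · have h1' : p * s + 2 ≤ m := by omega
      rw [ih (m - 1) (by omega), ih (m - 1 - p * s) (by omega)]
      have e1 : m - 1 + 1 = m := by omega
      have e2 : m - 1 - p * s + 1 = m - p * s := by omega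
      rw [e1, e2]
      have step : ∀ k ∈ Finset.range (m + 1), bterm s p m k
          = bterm s p (m - 1) k + (if k = 0 then 0 else bterm s p (m - 1 - p * s) (k - 1)) :=
        fun k _ => bterm_rec s p m k hs hp h1'
      rw [Finset.sum_congr rfl step, Finset.sum_add_distrib]
      congr 1
      · rw [Finset.sum_range_succ, bterm_eq_zero hps (by omega), Nat.add_zero]
      · rw [Finset.sum_range_succ']
        simp only [Nat.succ_ne_zero, if_false, Nat.add_sub_cancel, if_pos rfl, Nat.add_zero]
        refine Finset.sum_subset (Finset.range_subset_range.2 (by omega)) ?_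
        intro i hi hni
        rw [Finset.mem_range] at hi
        rw [Finset.mem_range, not_lt] at hni
        exact bterm_eq_zero hps (by omega)

lemma mem_coloredSchreier_s7 {s p n : ℕ} {F : Finset (ℕ × ℕ)} :
    F ∈ ColoredSchreier s p n ↔
      F ⊆ ((Finset.Ico 1 n) ×ˢ (Finset.Icc 1 s)) ∪ {(n, 1)} ∧
        (n, 1) ∈ F ∧ ∀ x ∈ F, p * F.card ≤ x.1 := by
  simp only [ColoredSchreier, Finset.mem_filter, Finset.mem_powerset, and_assoc]

lemma fiber_card (s p n k : ℕ) (hp : 1 ≤ p) :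
    ((ColoredSchreier s p n).filter fun F => F.card = k + 1).card
      = if p * (k + 1) ≤ n then (s * (n - p * (k + 1))).choose k else 0 := by
  split_ifs with h
  · have hX : ((Finset.Ico (p * (k + 1)) n) ×ˢ (Finset.Icc 1 s)).card
        = s * (n - p * (k + 1)) := by
      rw [Finset.card_product, Nat.card_Ico, Nat.card_Icc, Nat.add_sub_cancel]
      exact Nat.mul_comm _ _
    rw [← hX, ← Finset.card_powersetCard]
    apply Finset.card_bij (fun F _ => F.erase (n, 1))
    · intro F hF
      rw [Finset.mem_filter] at hF
      obtain ⟨hF1, hcard⟩ := hF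
      rw [mem_coloredSchreier_s7] at hF1
      obtain ⟨hsub, hmem, hcond⟩ := hF1
      rw [Finset.mem_powersetCard]
      constructor
      · intro x hx
        rw [Finset.mem_erase] at hx
        obtain ⟨hxne, hxF⟩ := hx
        have hxU := hsub hxF
        rw [Finset.mem_union, Finset.mem_singleton] at hxU
        rcases hxU with hxU | hxU
        · rw [Finset.mem_product] at hxU ⊢
          refine ⟨?_, hxU.2⟩
          rw [Finset.mem_Ico] at hxU ⊢
          have hc : p * F.card ≤ x.1 := hcond x hxF
          rw [hcard] at hc
          exact ⟨hc, hxU.1.2⟩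
        · exact absurd hxU hxne
      · rw [Finset.card_erase_of_mem hmem, hcard]
        omega
    · intro F hF F' hF' hee
      rw [Finset.mem_filter, mem_coloredSchreier_s7] at hF hF'
      have hins := congrArg (insert ((n : ℕ), (1 : ℕ))) hee
      rwa [Finset.insert_erase hF.1.2.1, Finset.insert_erase hF'.1.2.1] at hins
    · intro G hG
      rw [Finset.mem_powersetCard] at hG
      obtain ⟨hGX, hGcard⟩ := hG
      have hnG : ((n : ℕ), (1 : ℕ)) ∉ G := by
        intro hc
        have hm := hGX hc
        rw [Finset.mem_product, Finset.mem_Ico] at hm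
        exact absurd hm.1.2 (lt_irrefl n)
      refine ⟨insert (n, 1) G, ?_, Finset.erase_insert hnG⟩
      have hcard : (insert ((n : ℕ), (1 : ℕ)) G).card = k + 1 := by
        rw [Finset.card_insert_of_notMem hnG, hGcard]
      rw [Finset.mem_filter, mem_coloredSchreier_s7]
      refine ⟨⟨?_, Finset.mem_insert_self _ _, ?_⟩, hcard⟩
      · intro x hx
        rw [Finset.mem_insert] at hx
        rw [Finset.mem_union, Finset.mem_singleton]
        rcases hx with rfl | hx
        · right; rfl
        · left
          have hx' := hGX hx
          rw [Finset.mem_product, Finset.mem_Ico] at hx'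
          rw [Finset.mem_product, Finset.mem_Ico]
          have hpk : 1 ≤ p * (k + 1) := Nat.mul_pos hp (Nat.succ_pos k)
          exact ⟨⟨by omega, hx'.1.2⟩, hx'.2⟩
      · intro x hx
        rw [hcard]
        rw [Finset.mem_insert] at hx
        rcases hx with rfl | hx
        · exact h
        · have hx' := hGX hx
          rw [Finset.mem_product, Finset.mem_Ico] at hx'
          exact hx'.1.1
  · rw [Finset.card_eq_zero, Finset.eq_empty_iff_forall_notMem]
    intro F hF
    rw [Finset.mem_filter, mem_coloredSchreier_s7] at hF
    obtain ⟨⟨-, hmem, hcond⟩, hcard⟩ := hF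
    have hc : p * F.card ≤ n := hcond _ hmem
    rw [hcard] at hc
    exact h hc

lemma card_eq_sum_fibers (s p n : ℕ) (hp : 1 ≤ p) :
    (ColoredSchreier s p n).card
      = ∑ k ∈ Finset.range (n + 1),
          ((ColoredSchreier s p n).filter fun F => F.card = k + 1).card := by
  have hmap : ∀ F ∈ ColoredSchreier s p n, F.card - 1 ∈ Finset.range (n + 1) := by
    intro F hF
    rw [mem_coloredSchreier_s7] at hF
    obtain ⟨-, hmem, hcond⟩ := hF
    have h1 : p * F.card ≤ n := hcond _ hmem
    have h2 : F.card ≤ p * F.card := Nat.le_mul_of_pos_left F.card hp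
    rw [Finset.mem_range]
    omega
  rw [Finset.card_eq_sum_card_fiberwise hmap]
  apply Finset.sum_congr rfl
  intro k _
  congr 1
  apply Finset.filter_congr
  intro F hF
  have hpos : 0 < F.card := Finset.card_pos.2 ⟨_, (mem_coloredSchreier_s7.1 hF).2.1⟩
  omega

lemma guard_iff (s p n k : ℕ) (hs : 1 ≤ s) (hp : 1 ≤ p) (hn : 1 ≤ n) :
    ((p - 1) * s + 1 + p * s * k ≤ n * s - s + 1) ↔ p * (k + 1) ≤ n := by
  have hBA : (p - 1) * s + s = p * s := by
    have hpp : p - 1 + 1 = p := by omega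
    calc (p - 1) * s + s = (p - 1 + 1) * s := by ring
      _ = p * s := by rw [hpp]
  have hns : s ≤ n * s := by
    calc s = 1 * s := (one_mul s).symm
      _ ≤ n * s := Nat.mul_le_mul_right s hn
  have hcancel : p * (k + 1) * s ≤ n * s ↔ p * (k + 1) ≤ n :=
    mul_le_mul_iff_of_pos_right (by omega)
  rw [← hcancel]
  have e : p * (k + 1) * s = p * s * k + p * s := by ring
  omega

lemma value_eq (s p n k : ℕ) (hs : 1 ≤ s) (hp : 1 ≤ p) (hn : 1 ≤ n)
    (h : p * (k + 1) ≤ n) :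
    n * s - s + 1 - ((p - 1) * s + 1) - p * s * k = s * (n - p * (k + 1)) := by
  have hBA : (p - 1) * s + s = p * s := by
    have hpp : p - 1 + 1 = p := by omega
    calc (p - 1) * s + s = (p - 1 + 1) * s := by ring
      _ = p * s := by rw [hpp]
  have hns : s ≤ n * s := by
    calc s = 1 * s := (one_mul s).symm
      _ ≤ n * s := Nat.mul_le_mul_right s hn
  have e1 : s * (n - p * (k + 1)) = s * n - s * (p * (k + 1)) := Nat.mul_sub s _ _
  have e2 : s * (p * (k + 1)) = p * s * k + p * s := by ring
  have e3 : s * n = n * s := Nat.mul_comm s n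
  have hmul : p * (k + 1) * s ≤ n * s := Nat.mul_le_mul_right s h
  have e4 : p * (k + 1) * s = p * s * k + p * s := by ring
  omega

theorem card_coloredSchreier_eq_bseq (s p n : ℕ) (hs : 1 ≤ s) (hp : 1 ≤ p) (hn : 1 ≤ n) :
    (ColoredSchreier s p n).card = bseq s p (n * s - s + 1) := by
  have hps : 0 < p * s := Nat.mul_pos hp hs
  have key : ∀ k ∈ Finset.range (n + 1),
      ((ColoredSchreier s p n).filter fun F => F.card = k + 1).card
        = bterm s p (n * s - s + 1) k := by
    intro k _
    rw [fiber_card s p n k hp]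
    unfold bterm
    by_cases h : p * (k + 1) ≤ n
    · rw [if_pos h, if_pos ((guard_iff s p n k hs hp hn).2 h), value_eq s p n k hs hp hn h]
    · rw [if_neg h, if_neg (fun hg => h ((guard_iff s p n k hs hp hn).1 hg))]
  rw [card_eq_sum_fibers s p n hp, Finset.sum_congr rfl key, bseq_eq_sum s p hs hp]
  have hns : s ≤ n * s := by
    calc s = 1 * s := (one_mul s).symm
      _ ≤ n * s := Nat.mul_le_mul_right s (by omega)
  have h5 : (n - 1) * s = n * s - s := by rw [Nat.sub_mul, one_mul]
  have h4 : n - 1 ≤ (n - 1) * s := Nat.le_mul_of_pos_right (n - 1) hs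
  apply Finset.sum_subset (Finset.range_subset_range.2 (by omega))
  intro k _ hkn
  rw [Finset.mem_range, not_lt] at hkn
  unfold bterm
  rw [if_neg]
  intro hg
  have hgn := (guard_iff s p n k hs hp hn).1 hg
  have hpk : k + 1 ≤ p * (k + 1) := Nat.le_mul_of_pos_left (k + 1) hp
  omega
end

section
/- For positive integers s and p, the polynomial 1 − x − x^{ps+1} divides the polynomial 1 − Σ_{i=0}^{s} C(s,i)·x^{s(1 + i·p)} in ℤ[x]; moreover the quotient is Σ_{i=0}^{s−1} x^i (x^{sp} + 1)^i. -/
/-!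
With `y = x (x^{sp} + 1)` the divisor is `1 - y`, the claimed quotient is the geometric
sum `∑_{i<s} y^i`, and the dividend is `1 - y^s` after expanding `y^s = x^s (x^{sp} + 1)^s`
binomially.
-/

open Polynomial

theorem mul_X_pow_add_one_pow {R : Type*} [CommSemiring R] (x : R) (m n : ℕ) :
    (x * (x ^ m + 1)) ^ n = ∑ i ∈ Finset.range (n + 1), (n.choose i : R) * x ^ (n + i * m) := by
  rw [mul_pow, add_pow, Finset.mul_sum]
  refine Finset.sum_congr rfl fun i _ => ?_
  rw [one_pow, mul_one, ← pow_mul, pow_add]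
  ring

theorem poly_div_colored_general (s p : ℕ) :
    ((1 - X - X ^ (p * s + 1) : ℤ[X]) ∣
        1 - ∑ i ∈ Finset.range (s + 1), C ((s.choose i : ℤ)) * X ^ (s * (1 + i * p))) ∧
      (1 - X - X ^ (p * s + 1) : ℤ[X]) *
          (∑ i ∈ Finset.range s, X ^ i * (X ^ (s * p) + 1) ^ i) =
        1 - ∑ i ∈ Finset.range (s + 1), C ((s.choose i : ℤ)) * X ^ (s * (1 + i * p)) := by
  set y : ℤ[X] := X * (X ^ (s * p) + 1)
  have divisor_eq : (1 - X - X ^ (p * s + 1) : ℤ[X]) = 1 - y := by ring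
  have quotient_eq : ∑ i ∈ Finset.range s, X ^ i * (X ^ (s * p) + 1) ^ i =
      ∑ i ∈ Finset.range s, y ^ i := by
    simp only [y, mul_pow]
  have dividend_eq :
      ∑ i ∈ Finset.range (s + 1), C ((s.choose i : ℤ)) * X ^ (s * (1 + i * p)) = y ^ s := by
    rw [mul_X_pow_add_one_pow]
    refine Finset.sum_congr rfl fun i _ => ?_
    rw [C_eq_natCast]
    ring
  have key : (1 - X - X ^ (p * s + 1) : ℤ[X]) *
      (∑ i ∈ Finset.range s, X ^ i * (X ^ (s * p) + 1) ^ i) =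
      1 - ∑ i ∈ Finset.range (s + 1), C ((s.choose i : ℤ)) * X ^ (s * (1 + i * p)) := by
    rw [divisor_eq, quotient_eq, dividend_eq, mul_neg_geom_sum]
  exact ⟨Dvd.intro _ key, key⟩

theorem poly_div_colored (s p : ℕ) (hs : 1 ≤ s) (hp : 1 ≤ p) :
    ((1 - X - X ^ (p * s + 1) : ℤ[X]) ∣
        1 - ∑ i ∈ Finset.range (s + 1), C ((s.choose i : ℤ)) * X ^ (s * (1 + i * p))) ∧
      (1 - X - X ^ (p * s + 1) : ℤ[X]) *
          (∑ i ∈ Finset.range s, X ^ i * (X ^ (s * p) + 1) ^ i) =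
        1 - ∑ i ∈ Finset.range (s + 1), C ((s.choose i : ℤ)) * X ^ (s * (1 + i * p)) :=
  poly_div_colored_general s p
end

section
/- For any integer u ≥ 2 and integer n ≥ 1, the number of Schreier sets F (i.e., min F ≥ |F|) contained in the set of the first n positive integers not divisible by u, with the n-th such integer ⌊(un−1)/(u−1)⌋ belonging to F, equals Σ_{k=1}^{⌊((n+1)u−1)/(2u−1)⌋} C(n − k + ⌊(k−1)/u⌋, k − 1). -/
/-!
Writing `g j = ⌊(uj-1)/(u-1)⌋ = j + ⌊(j-1)/(u-1)⌋` for the `j`-th positive integer not divisible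
by `u`, a Schreier set of size `k` through `g n` is `g n` together with any `k - 1` of the other
elements `≥ k` of `{g 1, …, g n}`. Since `g j ≥ k ↔ j ≥ k - ⌊(k-1)/u⌋`, there are
`n - k + ⌊(k-1)/u⌋` such elements. The binomial coefficient vanishes once
`k > ⌊((n+1)u-1)/(2u-1)⌋`, which truncates the sum over `k ≤ n`.
-/

/-- The set of the first `n` positive integers not divisible by `u`. -/
def Gset (u n : ℕ) : Finset ℕ := (Finset.Icc 1 n).image fun k => (u * k - 1) / (u - 1)

/-- The Schreier subsets of `Gset u n` containing its largest element `⌊(un-1)/(u-1)⌋`. -/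
def Dset (u n : ℕ) : Finset (Finset ℕ) :=
  (Gset u n).powerset.filter fun F => (u * n - 1) / (u - 1) ∈ F ∧ ∀ x ∈ F, F.card ≤ x

open Finset

def schreierSetsThrough (G : Finset ℕ) (m : ℕ) : Finset (Finset ℕ) :=
  G.powerset.filter fun F => m ∈ F ∧ ∀ x ∈ F, #F ≤ x

section SchreierSets

variable {G : Finset ℕ} {m k : ℕ}

lemma mem_schreierSetsThrough {F : Finset ℕ} :
    F ∈ schreierSetsThrough G m ↔ F ⊆ G ∧ m ∈ F ∧ ∀ x ∈ F, #F ≤ x := by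
  simp [schreierSetsThrough]

lemma card_mem_Icc_of_mem_schreierSetsThrough {F : Finset ℕ} (hF : F ∈ schreierSetsThrough G m) :
    #F ∈ Icc 1 #G := by
  obtain ⟨hFG, hmF, -⟩ := mem_schreierSetsThrough.1 hF
  exact mem_Icc.2 ⟨card_pos.2 ⟨m, hmF⟩, card_le_card hFG⟩

lemma card_filter_card_schreierSetsThrough (hm : m ∈ G) (hk : 1 ≤ k) (hkm : k ≤ m) :
    #{F ∈ schreierSetsThrough G m | #F = k} = (#{x ∈ G | k ≤ x} - 1).choose (k - 1) := by
  have hm' : m ∈ {x ∈ G | k ≤ x} := mem_filter.2 ⟨hm, hkm⟩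
  rw [← card_erase_of_mem hm', ← card_powersetCard]
  apply card_nbij' (fun F => F.erase m) (insert m)
  · intro F hF
    simp only [mem_coe, mem_filter, mem_schreierSetsThrough] at hF
    obtain ⟨⟨hFG, hmF, hF⟩, rfl⟩ := hF
    simp only [mem_coe, mem_powersetCard, card_erase_of_mem hmF, and_true]
    intro x hx
    obtain ⟨hxm, hxF⟩ := mem_erase.1 hx
    exact mem_erase.2 ⟨hxm, mem_filter.2 ⟨hFG hxF, hF x hxF⟩⟩
  · intro S hS
    simp only [mem_coe, mem_powersetCard] at hS
    obtain ⟨hS, hScard⟩ := hS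
    have hmS : m ∉ S := fun h => (mem_erase.1 (hS h)).1 rfl
    have hcard : #(insert m S) = k := by rw [card_insert_of_notMem hmS, hScard]; omega
    simp only [mem_coe, mem_filter, mem_schreierSetsThrough, hcard, and_true]
    refine ⟨insert_subset hm fun x hx => (mem_filter.1 (mem_of_mem_erase (hS hx))).1,
      mem_insert_self m S, ?_⟩
    intro x hx
    rcases mem_insert.1 hx with rfl | hxS
    · exact hkm
    · exact (mem_filter.1 (mem_of_mem_erase (hS hxS))).2
  · intro F hF
    exact insert_erase (mem_schreierSetsThrough.1 (mem_filter.1 hF).1).2.1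
  · intro S hS
    exact erase_insert fun h => (mem_erase.1 ((mem_powersetCard.1 hS).1 h)).1 rfl

end SchreierSets

section NonMultiples

variable {u : ℕ}

lemma Dset_eq_schreierSetsThrough (u n : ℕ) :
    Dset u n = schreierSetsThrough (Gset u n) ((u * n - 1) / (u - 1)) := rfl

lemma mul_sub_one_div_pred (hu : 2 ≤ u) (j : ℕ) :
    (u * j - 1) / (u - 1) = j + (j - 1) / (u - 1) := by
  rcases j with _ | j
  · simp
  · have : u * (j + 1) - 1 = j + (j + 1) * (u - 1) := by
      zify [show 1 ≤ u by omega, show 1 ≤ u * (j + 1) by nlinarith]; ring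
    rw [this, Nat.add_mul_div_right _ _ (by omega), Nat.add_sub_cancel, add_comm]

lemma strictMono_mul_sub_one_div_pred (hu : 2 ≤ u) :
    StrictMono fun j => (u * j - 1) / (u - 1) := by
  intro i j hij
  simp only [mul_sub_one_div_pred hu]
  have : (i - 1) / (u - 1) ≤ (j - 1) / (u - 1) := Nat.div_le_div_right (by omega)
  omega

lemma le_mul_sub_one_div_pred_iff (hu : 2 ≤ u) {k : ℕ} (hk : 1 ≤ k) (j : ℕ) :
    k ≤ (u * j - 1) / (u - 1) ↔ k - (k - 1) / u ≤ j := by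
  have hpos : 0 < k * (u - 1) := Nat.mul_pos hk (by omega)
  have hlt : k * (u - 1) ≤ u * j - 1 ↔ k * (u - 1) < u * j := by omega
  rw [Nat.le_div_iff_mul_le (by omega), hlt]
  have hlo := Nat.div_mul_le_self (k - 1) u
  have hhi := Nat.lt_div_mul_add (a := k - 1) (show 0 < u by omega)
  generalize (k - 1) / u = d at hlo hhi ⊢
  have hd : d ≤ k := by have := Nat.le_mul_of_pos_right d (show 0 < u by omega); omega
  zify [show 1 ≤ u by omega, hk, hd] at hlo hhi ⊢
  constructor
  · intro h; by_contra! h'; nlinarith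
  · intro h; nlinarith

lemma card_Gset (hu : 2 ≤ u) (n : ℕ) : #(Gset u n) = n := by
  rw [Gset, card_image_of_injective _ (strictMono_mul_sub_one_div_pred hu).injective,
    Nat.card_Icc, Nat.add_sub_cancel]

lemma card_filter_le_Gset (hu : 2 ≤ u) {k : ℕ} (hk : 1 ≤ k) (n : ℕ) :
    #{x ∈ Gset u n | k ≤ x} = n + 1 - (k - (k - 1) / u) := by
  have : {x ∈ Gset u n | k ≤ x} =
      (Icc (k - (k - 1) / u) n).image fun j => (u * j - 1) / (u - 1) := by
    rw [Gset, filter_image]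
    congr 1
    ext j
    simp only [mem_filter, mem_Icc, le_mul_sub_one_div_pred_iff hu hk]
    have := Nat.div_le_self (k - 1) u
    omega
  rw [this, card_image_of_injective _ (strictMono_mul_sub_one_div_pred hu).injective,
    Nat.card_Icc]

lemma card_filter_card_Dset (hu : 2 ≤ u) {n k : ℕ} (hk : 1 ≤ k) (hkn : k ≤ n) :
    #{F ∈ Dset u n | #F = k} = (n - k + (k - 1) / u).choose (k - 1) := by
  have htop : (u * n - 1) / (u - 1) ∈ Gset u n :=
    mem_image.2 ⟨n, mem_Icc.2 ⟨by omega, le_rfl⟩, rfl⟩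
  have hk_le_top : k ≤ (u * n - 1) / (u - 1) := by
    rw [mul_sub_one_div_pred hu]; exact le_add_right hkn
  rw [Dset_eq_schreierSetsThrough, card_filter_card_schreierSetsThrough htop hk hk_le_top,
    card_filter_le_Gset hu hk]
  have := Nat.div_le_self (k - 1) u
  generalize (k - 1) / u = d at this ⊢
  congr 1
  omega

end NonMultiples

lemma div_two_mul_sub_one_le (u n : ℕ) : ((n + 1) * u - 1) / (2 * u - 1) ≤ n := by
  rcases Nat.eq_zero_or_pos u with rfl | hu
  · simp
  rw [← Nat.lt_succ_iff, Nat.div_lt_iff_lt_mul (by omega)]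
  have : (n + 1) * u ≤ (n + 1) * (2 * u - 1) := Nat.mul_le_mul_left _ (by omega)
  have : 0 < (n + 1) * u := by positivity
  rw [Nat.succ_eq_add_one]
  omega

/-- Beyond `k = ⌊((n+1)u-1)/(2u-1)⌋` we have `n - k + ⌊(k-1)/u⌋ < k - 1`: otherwise
`(2k - ⌊(k-1)/u⌋) u ≤ (n+1) u ≤ k (2u-1)` would force `k ≤ u ⌊(k-1)/u⌋ ≤ k - 1`. -/
lemma choose_eq_zero_of_div_two_mul_sub_one_lt {u n k : ℕ} (hu : 1 ≤ u)
    (hk : ((n + 1) * u - 1) / (2 * u - 1) < k) (hkn : k ≤ n) :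
    (n - k + (k - 1) / u).choose (k - 1) = 0 := by
  apply Nat.choose_eq_zero_of_lt
  have hk1 : 1 ≤ k := Nat.zero_lt_of_lt hk
  rw [Nat.div_lt_iff_lt_mul (by omega)] at hk
  have hd := Nat.div_mul_le_self (k - 1) u
  generalize (k - 1) / u = d at hd ⊢
  zify [hu, hk1, hkn, show 1 ≤ 2 * u by omega,
    show 1 ≤ (n + 1) * u by nlinarith] at hk hd ⊢
  nlinarith

theorem card_Dset_formula_general (u n : ℕ) (hu : 2 ≤ u) :
    (Dset u n).card =
      ∑ k ∈ Finset.Icc 1 (((n + 1) * u - 1) / (2 * u - 1)),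
        (n - k + (k - 1) / u).choose (k - 1) := by
  have hsizes : ∀ F ∈ Dset u n, #F ∈ Icc 1 n := fun F hF => by
    rw [Dset_eq_schreierSetsThrough] at hF
    simpa only [card_Gset hu] using card_mem_Icc_of_mem_schreierSetsThrough hF
  rw [card_eq_sum_card_fiberwise hsizes,
    sum_congr rfl fun k hk => card_filter_card_Dset hu (mem_Icc.1 hk).1 (mem_Icc.1 hk).2]
  symm
  apply sum_subset (Icc_subset_Icc_right (div_two_mul_sub_one_le u n))
  intro k hk hkK
  simp only [mem_Icc, not_and, not_le] at hk hkK
  exact choose_eq_zero_of_div_two_mul_sub_one_lt (by omega) (hkK hk.1) hk.2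

theorem card_Dset_formula (u n : ℕ) (hu : 2 ≤ u) (hn : 1 ≤ n) :
    (Dset u n).card =
      ∑ k ∈ Finset.Icc 1 (((n + 1) * u - 1) / (2 * u - 1)),
        (n - k + (k - 1) / u).choose (k - 1) :=
  card_Dset_formula_general u n hu
end

section
/- Define d_{u,n} by d_{u,n} = 1 for 1 ≤ n ≤ 2u − 1 and d_{u,n} = d_{u,n−u} + d_{u,n−2u+1} for n ≥ 2u. Then for every integer u ≥ 2 and every positive integer n, d_{u,n} = Σ_{i=0}^{⌊(n−1)/u⌋} C(⌊(n + (u−1)i − u)/(2u−1)⌋, i). -/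
/-!
Write `T(n, i) = C(⌊(n + (u-1)i - u)/(2u-1)⌋, i)`. For `n ≥ 2u` the floor in `T(n, i+1)`
exceeds by one the common floor of `T(n-u, i)` and `T(n-(2u-1), i+1)`, so Pascal's rule gives
`T(n, i+1) = T(n-u, i) + T(n-(2u-1), i+1)`. Since `T(n, i) = 0` once `i > ⌊(n-1)/u⌋`, the range of
summation may be enlarged at will, and summing over `i` shows that the right-hand side satisfies
the recurrence of `dseq`; the initial values agree because `T(n, 0) = 1` and `T(n, 1) = 0` for
`n < 2u`.
-/

/-- The parent sequence: `dseq u n = 1` for `1 ≤ n ≤ 2u - 1` and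
`dseq u n = dseq u (n - u) + dseq u (n - (2u - 1))` for `n ≥ 2u`
(the clause `u < 2` is only for termination; all statements assume `u ≥ 2`). -/
def dseq (u : ℕ) : ℕ → ℕ
  | n =>
    if _h : n ≤ 2 * u - 1 ∨ u < 2 then 1
    else dseq u (n - u) + dseq u (n - (2 * u - 1))
  termination_by n => n
  decreasing_by all_goals omega

open Finset

def dterm (u n i : ℕ) : ℕ :=
  ((n + (u - 1) * i - u) / (2 * u - 1)).choose i

section dterm

variable {u n : ℕ}

@[simp]
theorem dterm_zero_right (u n : ℕ) : dterm u n 0 = 1 :=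
  Nat.choose_zero_right _

theorem dterm_eq_zero_of_div_lt {i : ℕ} (hu : 1 ≤ u) (hi : (n - 1) / u < i) : dterm u n i = 0 := by
  have hni : n - 1 < i * u := (Nat.div_lt_iff_lt_mul hu).mp hi
  have hmul : i * (2 * u - 1) = i * u + (u - 1) * i := by
    zify [show 1 ≤ u from hu, show 1 ≤ 2 * u by omega]
    ring
  apply Nat.choose_eq_zero_of_lt
  rw [Nat.div_lt_iff_lt_mul (by omega)]
  have : u ≤ i * u := Nat.le_mul_of_pos_left u ((Nat.zero_le _).trans_lt hi)
  omega

theorem sum_range_dterm_eq {N : ℕ} (hu : 1 ≤ u) (hN : (n - 1) / u < N) :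
    ∑ i ∈ range N, dterm u n i = ∑ i ∈ range ((n - 1) / u + 1), dterm u n i := by
  refine (sum_subset (range_subset_range.mpr hN) fun i _ hi => ?_).symm
  exact dterm_eq_zero_of_div_lt hu (by simpa using hi)

theorem dterm_succ (i : ℕ) (hu : 1 ≤ u) (hn : 2 * u ≤ n) :
    dterm u n (i + 1) = dterm u (n - u) i + dterm u (n - (2 * u - 1)) (i + 1) := by
  have hmul : (u - 1) * (i + 1) = (u - 1) * i + (u - 1) := by ring
  set a := (n - 2 * u + (u - 1) * i) / (2 * u - 1)
  have h₁ : (n + (u - 1) * (i + 1) - u) / (2 * u - 1) = a + 1 := by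
    rw [← Nat.add_div_right _ (by omega : 0 < 2 * u - 1)]
    congr 1
    omega
  have h₂ : (n - u + (u - 1) * i - u) / (2 * u - 1) = a := by
    congr 1
    omega
  have h₃ : (n - (2 * u - 1) + (u - 1) * (i + 1) - u) / (2 * u - 1) = a := by
    congr 1
    omega
  simp only [dterm, h₁, h₂, h₃, Nat.choose_succ_succ]

theorem sum_dterm_of_le (hu : 1 ≤ u) (hn : n ≤ 2 * u - 1) :
    ∑ i ∈ range ((n - 1) / u + 1), dterm u n i = 1 := by
  have hdiv : (n - 1) / u < 2 := (Nat.div_lt_iff_lt_mul hu).mpr (by omega)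
  have hone : dterm u n 1 = 0 :=
    Nat.choose_eq_zero_of_lt (by rw [Nat.div_eq_of_lt (by omega)]; omega)
  rw [← sum_range_dterm_eq hu hdiv]
  simp [sum_range_succ, hone]

theorem sum_dterm_eq_add (hu : 1 ≤ u) (hn : 2 * u ≤ n) :
    ∑ i ∈ range ((n - 1) / u + 1), dterm u n i =
      ∑ i ∈ range ((n - u - 1) / u + 1), dterm u (n - u) i +
        ∑ i ∈ range ((n - (2 * u - 1) - 1) / u + 1), dterm u (n - (2 * u - 1)) i := by
  set K := (n - u - 1) / u
  have hK : (n - 1) / u = K + 1 := by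
    rw [Nat.div_eq_sub_div hu (by omega)]
    congr 2
    omega
  have hK' : (n - (2 * u - 1) - 1) / u < K + 2 :=
    Nat.lt_succ_of_le ((Nat.div_le_div_right (by omega)).trans K.le_succ)
  rw [← sum_range_dterm_eq hu hK', sum_range_succ' _ (K + 1), hK, sum_range_succ']
  simp only [dterm_succ _ hu hn, sum_add_distrib, dterm_zero_right]
  ring

end dterm

theorem dseq_of_le {u n : ℕ} (hn : n ≤ 2 * u - 1) : dseq u n = 1 := by
  rw [dseq, dif_pos (Or.inl hn)]

theorem dseq_of_lt {u n : ℕ} (hu : 2 ≤ u) (hn : 2 * u - 1 < n) :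
    dseq u n = dseq u (n - u) + dseq u (n - (2 * u - 1)) := by
  rw [dseq, dif_neg (by omega)]

theorem dseq_formula_general (u n : ℕ) (hu : 2 ≤ u) :
    dseq u n =
      ∑ i ∈ Finset.range ((n - 1) / u + 1),
        ((n + (u - 1) * i - u) / (2 * u - 1)).choose i := by
  change dseq u n = ∑ i ∈ range ((n - 1) / u + 1), dterm u n i
  induction n using Nat.strong_induction_on with
  | _ n ih =>
    rcases le_or_gt n (2 * u - 1) with hbase | hrec
    · rw [dseq_of_le hbase, sum_dterm_of_le (by omega) hbase]
    · rw [dseq_of_lt hu hrec, sum_dterm_eq_add (by omega) (by omega), ← ih (n - u) (by omega),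
        ← ih (n - (2 * u - 1)) (by omega)]

theorem dseq_formula (u n : ℕ) (hu : 2 ≤ u) (hn : 1 ≤ n) :
    dseq u n =
      ∑ i ∈ Finset.range ((n - 1) / u + 1),
        ((n + (u - 1) * i - u) / (2 * u - 1)).choose i :=
  dseq_formula_general u n hu
end

section
/- For every integer u ≥ 2 and every positive integer n, |D_{u,n}| = d_{u, un − (u−1)}, where d_{u,·} is defined by d_{u,m} = 1 for 1 ≤ m ≤ 2u−1 and d_{u,m} = d_{u,m−u} + d_{u,m−2u+1} for m ≥ 2u. -/
open Finset

namespace Schreier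

def nthNonMultiple (u k : ℕ) : ℕ := (u * k - 1) / (u - 1)

variable {u : ℕ}

lemma dseq_of_le_two_mul_sub_one {m : ℕ} (hm : m ≤ 2 * u - 1) : dseq u m = 1 := by
  rw [dseq, dif_pos (Or.inl hm)]

lemma dseq_of_two_mul_le (hu : 2 ≤ u) {m : ℕ} (hm : 2 * u ≤ m) :
    dseq u m = dseq u (m - u) + dseq u (m - (2 * u - 1)) := by
  rw [dseq, dif_neg (by omega)]

lemma nthNonMultiple_eq (hu : 2 ≤ u) (k : ℕ) : nthNonMultiple u k = k + (k - 1) / (u - 1) := by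
  rcases k with _ | k
  · simp [nthNonMultiple]
  · have h : u * (k + 1) - 1 = (u - 1) * (k + 1) + k := by
      have : u * (k + 1) = (u - 1) * (k + 1) + (k + 1) := by
        rw [← add_one_mul, Nat.sub_add_cancel (by omega)]
      omega
    rw [nthNonMultiple, h, Nat.mul_add_div (by omega)]
    simp

lemma nthNonMultiple_strictMono (hu : 2 ≤ u) : StrictMono (nthNonMultiple u) := fun k l hkl => by
  have : (k - 1) / (u - 1) ≤ (l - 1) / (u - 1) := Nat.div_le_div_right (by omega)
  rw [nthNonMultiple_eq hu, nthNonMultiple_eq hu]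
  omega

lemma le_nthNonMultiple (hu : 2 ≤ u) (k : ℕ) : k ≤ nthNonMultiple u k := by
  rw [nthNonMultiple_eq hu]
  exact Nat.le_add_right _ _

lemma nthNonMultiple_of_lt (hu : 2 ≤ u) {k : ℕ} (hk : k < u) : nthNonMultiple u k = k := by
  rw [nthNonMultiple_eq hu, Nat.div_eq_of_lt (by omega), add_zero]

lemma nthNonMultiple_add_sub_one (hu : 2 ≤ u) {k : ℕ} (hk : 1 ≤ k) :
    nthNonMultiple u (k + (u - 1)) = nthNonMultiple u k + u := by
  have : k + (u - 1) - 1 = k - 1 + (u - 1) := by omega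
  rw [nthNonMultiple_eq hu, nthNonMultiple_eq hu, this, Nat.add_div_right _ (by omega)]
  omega

lemma Gset_eq_image (u N : ℕ) : Gset u N = (Icc 1 N).image (nthNonMultiple u) := rfl

lemma Gset_succ (u N : ℕ) : Gset u (N + 1) = insert (nthNonMultiple u (N + 1)) (Gset u N) := by
  rw [Gset_eq_image, Gset_eq_image, ← insert_Icc_right_eq_Icc_add_one (by omega), image_insert]

lemma le_of_mem_Gset (hu : 2 ≤ u) {N x : ℕ} (hx : x ∈ Gset u N) : x ≤ nthNonMultiple u N := by
  obtain ⟨k, hk, rfl⟩ := mem_image.1 hx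
  exact (nthNonMultiple_strictMono hu).monotone (mem_Icc.1 hk).2

lemma add_mem_Gset_add_iff (hu : 2 ≤ u) {N x : ℕ} :
    x + u ∈ Gset u (N + (u - 1)) ↔ x ∈ Gset u N := by
  simp only [Gset_eq_image, mem_image, mem_Icc]
  constructor
  · rintro ⟨k, ⟨hk1, hkN⟩, hkx⟩
    have hk : u ≤ k := by
      by_contra! hk
      rw [nthNonMultiple_of_lt hu hk] at hkx
      omega
    refine ⟨k - (u - 1), ⟨by omega, by omega⟩, ?_⟩
    have := nthNonMultiple_add_sub_one hu (k := k - (u - 1)) (by omega)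
    rw [Nat.sub_add_cancel (by omega)] at this
    omega
  · rintro ⟨k, ⟨hk1, hkN⟩, rfl⟩
    exact ⟨k + (u - 1), ⟨by omega, by omega⟩, nthNonMultiple_add_sub_one hu hk1⟩

lemma nthNonMultiple_succ_notMem_Gset (hu : 2 ≤ u) (N : ℕ) :
    nthNonMultiple u (N + 1) ∉ Gset u N := fun h =>
  (le_of_mem_Gset hu h).not_gt (nthNonMultiple_strictMono hu (Nat.lt_add_one N))

def schreierSets (u N r : ℕ) : Finset (Finset ℕ) :=
  (Gset u N).powerset.filter fun F => ∀ x ∈ F, #F + r ≤ x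

def schreierSetsWithMax (u N r : ℕ) : Finset (Finset ℕ) :=
  (schreierSets u N r).filter (nthNonMultiple u N ∈ ·)

variable {N r : ℕ} {F : Finset ℕ}

lemma mem_schreierSets : F ∈ schreierSets u N r ↔ F ⊆ Gset u N ∧ ∀ x ∈ F, #F + r ≤ x := by
  rw [schreierSets, mem_filter, mem_powerset]

lemma mem_schreierSetsWithMax :
    F ∈ schreierSetsWithMax u N r ↔
      F ⊆ Gset u N ∧ (∀ x ∈ F, #F + r ≤ x) ∧ nthNonMultiple u N ∈ F := by
  rw [schreierSetsWithMax, mem_filter, mem_schreierSets, and_assoc]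

lemma lt_of_mem_schreierSetsWithMax {x : ℕ} (hF : F ∈ schreierSetsWithMax u N r) (hx : x ∈ F) :
    r < x := by
  have := (mem_schreierSetsWithMax.1 hF).2.1 x hx
  have := card_pos.2 ⟨x, hx⟩
  omega

lemma schreierSets_eq_singleton_empty (hu : 2 ≤ u) (h : nthNonMultiple u N ≤ r) :
    schreierSets u N r = {∅} := by
  ext F
  rw [mem_singleton, mem_schreierSets]
  constructor
  · rintro ⟨hFG, hF⟩
    refine eq_empty_iff_forall_notMem.2 fun x hx => ?_
    have := hF x hx
    have := le_of_mem_Gset hu (hFG hx)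
    have := card_pos.2 ⟨x, hx⟩
    omega
  · rintro rfl
    simp

lemma card_schreierSetsWithMax_succ (hu : 2 ≤ u) (hr : r ≤ N) :
    #(schreierSetsWithMax u (N + 1) r) = #(schreierSets u N (r + 1)) := by
  set t := nthNonMultiple u (N + 1)
  have ht : t ∉ Gset u N := nthNonMultiple_succ_notMem_Gset hu N
  refine card_nbij' (·.erase t) (insert t) (fun F hF => ?_) (fun T hT => ?_)
    (fun F hF => insert_erase (mem_schreierSetsWithMax.1 hF).2.2)
    (fun T hT => erase_insert fun htT => ht ((mem_schreierSets.1 hT).1 htT))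
  · show F.erase t ∈ _
    obtain ⟨hFG, hF, htF : t ∈ F⟩ := mem_schreierSetsWithMax.1 hF
    have hcard := card_erase_add_one htF
    refine mem_schreierSets.2 ⟨?_, fun x hx => ?_⟩
    · rwa [← subset_insert_iff, ← Gset_succ]
    · have := hF x (mem_of_mem_erase hx)
      omega
  · obtain ⟨hTG, hT⟩ := mem_schreierSets.1 hT
    have htT : t ∉ T := fun htT => ht (hTG htT)
    refine mem_schreierSetsWithMax.2 ⟨?_, fun x hx => ?_, mem_insert_self t T⟩
    · rw [Gset_succ]
      exact insert_subset_insert t hTG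
    rw [card_insert_of_notMem htT]
    rcases mem_insert.1 hx with rfl | hx
    · rcases T.eq_empty_or_nonempty with rfl | ⟨y, hy⟩
      · have := le_nthNonMultiple hu (N + 1)
        simp only [card_empty]
        omega
      · have := hT y hy
        have := le_of_mem_Gset hu (hTG hy)
        have := nthNonMultiple_strictMono hu (Nat.lt_add_one N)
        omega
    · have := hT x hx
      omega

lemma card_schreierSetsWithMax_succ_eq_one (hu : 2 ≤ u) (hr : r ≤ N) (hNr : N ≤ r + 1)
    (hN : N < u) : #(schreierSetsWithMax u (N + 1) r) = 1 := by
  rw [card_schreierSetsWithMax_succ hu hr, card_eq_one]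
  exact ⟨∅, schreierSets_eq_singleton_empty hu (by rw [nthNonMultiple_of_lt hu hN]; omega)⟩

lemma card_schreierSets_succ (hu : 2 ≤ u) :
    #(schreierSets u (N + 1) r) = #(schreierSets u N r) + #(schreierSetsWithMax u (N + 1) r) := by
  have hnotMem : (schreierSets u (N + 1) r).filter (nthNonMultiple u (N + 1) ∉ ·) =
      schreierSets u N r := by
    ext F
    simp only [mem_filter, mem_schreierSets, Gset_succ]
    constructor
    · rintro ⟨⟨hFG, hF⟩, htF⟩
      exact ⟨(subset_insert_iff_of_notMem htF).1 hFG, hF⟩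
    · rintro ⟨hFG, hF⟩
      exact ⟨⟨hFG.trans (subset_insert _ _), hF⟩,
        fun htF => nthNonMultiple_succ_notMem_Gset hu N (hFG htF)⟩
  rw [← hnotMem, schreierSetsWithMax]
  exact (card_filter_add_card_filter_not _).symm.trans (Nat.add_comm _ _)

lemma card_schreierSetsWithMax_succ_eq_add (hu : 2 ≤ u) (hr : r < N) :
    #(schreierSetsWithMax u (N + 1) r) =
      #(schreierSetsWithMax u N r) + #(schreierSetsWithMax u N (r + 1)) := by
  obtain ⟨M, rfl⟩ : ∃ M, N = M + 1 := ⟨N - 1, by omega⟩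
  rw [card_schreierSetsWithMax_succ hu (N := M + 1) (by omega), card_schreierSets_succ hu,
    card_schreierSetsWithMax_succ hu (N := M) (r := r) (by omega)]

lemma card_schreierSetsWithMax_add_sub_one (hu : 2 ≤ u) (hN : 1 ≤ N) :
    #(schreierSetsWithMax u (N + (u - 1)) u) = #(schreierSetsWithMax u N 0) := by
  have htop := nthNonMultiple_add_sub_one hu hN
  refine card_nbij' (·.image (· - u)) (·.image (· + u)) (fun F hF => ?_) (fun T hT => ?_)
    (fun F hF => ?_) (fun T hT => ?_)
  · show F.image (· - u) ∈ _
    have hlt {x} (hx : x ∈ F) : u < x := lt_of_mem_schreierSetsWithMax hF hx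
    obtain ⟨hFG, hF, htF⟩ := mem_schreierSetsWithMax.1 hF
    have hcard : #(F.image (· - u)) = #F := card_image_of_injOn fun x hx y hy hxy => by
      have := hlt hx
      have := hlt hy
      omega
    refine mem_schreierSetsWithMax.2 ⟨fun y hy => ?_, fun y hy => ?_, ?_⟩
    · obtain ⟨x, hx, rfl⟩ := mem_image.1 hy
      rw [← add_mem_Gset_add_iff hu, Nat.sub_add_cancel (hlt hx).le]
      exact hFG hx
    · obtain ⟨x, hx, rfl⟩ := mem_image.1 hy
      have := hF x hx
      omega
    · exact mem_image.2 ⟨_, htF, by omega⟩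
  · show T.image (· + u) ∈ _
    obtain ⟨hTG, hT, htT⟩ := mem_schreierSetsWithMax.1 hT
    have hcard : #(T.image (· + u)) = #T := card_image_of_injective _ (add_left_injective u)
    refine mem_schreierSetsWithMax.2 ⟨fun y hy => ?_, fun y hy => ?_, ?_⟩
    · obtain ⟨x, hx, rfl⟩ := mem_image.1 hy
      exact (add_mem_Gset_add_iff hu).2 (hTG hx)
    · obtain ⟨x, hx, rfl⟩ := mem_image.1 hy
      have := hT x hx
      omega
    · exact mem_image.2 ⟨_, htT, htop.symm⟩
  · show (F.image (· - u)).image (· + u) = F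
    rw [image_image]
    refine (image_congr fun x hx => ?_).trans image_id
    have := lt_of_mem_schreierSetsWithMax hF hx
    simp only [Function.comp_apply, id_eq]
    omega
  · simp [image_image, Function.comp_def]

lemma card_schreierSetsWithMax_eq_dseq (hu : 2 ≤ u) (j : ℕ) (hr : r < u) :
    #(schreierSetsWithMax u (j + r + 1) r) = dseq u (j * u + r + 1) := by
  induction j using Nat.strong_induction_on generalizing r with
  | _ j ih =>
  by_cases hbase : j * u + r + 1 ≤ 2 * u - 1
  · have hj : j ≤ 1 := by
      by_contra! hj
      have : 2 * u ≤ j * u := Nat.mul_le_mul_right u hj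
      omega
    have hjr : j + r < u := by
      rcases Nat.le_one_iff_eq_zero_or_eq_one.1 hj with rfl | rfl <;> omega
    rw [dseq_of_le_two_mul_sub_one hbase, card_schreierSetsWithMax_succ_eq_one hu (by omega)
      (by omega) hjr]
  obtain ⟨i, rfl⟩ : ∃ i, j = i + 1 := ⟨j - 1, by
    have : j ≠ 0 := by rintro rfl; omega
    omega⟩
  rw [add_one_mul] at hbase ⊢
  rw [dseq_of_two_mul_le hu (by omega), show i + 1 + r + 1 = i + r + 1 + 1 by omega,
    card_schreierSetsWithMax_succ_eq_add hu (by omega),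
    show i * u + u + r + 1 - u = i * u + r + 1 by omega, ih i (by omega) hr]
  congr 1
  rcases (by omega : r + 1 < u ∨ r + 1 = u) with hr' | hr'
  · obtain ⟨k, rfl⟩ : ∃ k, i = k + 1 := ⟨i - 1, by
      have : i ≠ 0 := by rintro rfl; omega
      omega⟩
    rw [add_one_mul, show k + 1 + r + 1 = k + (r + 1) + 1 by omega, ih k (by omega) hr']
    congr 1
    omega
  · -- `r + 1 = u` leaves the range `r < u`; translating by `u` brings it back to `r = 0`.
    rw [show i + r + 1 = i + 1 + (u - 1) by omega, hr',
      card_schreierSetsWithMax_add_sub_one hu (by omega), ih i (by omega) (r := 0) (by omega)]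
    congr 1
    omega

end Schreier

theorem card_Dset_eq_dseq (u n : ℕ) (hu : 2 ≤ u) (hn : 1 ≤ n) :
    (Dset u n).card = dseq u (u * n - (u - 1)) := by
  obtain ⟨k, rfl⟩ : ∃ k, n = k + 1 := ⟨n - 1, by omega⟩
  have hD : Dset u (k + 1) = Schreier.schreierSetsWithMax u (k + 0 + 1) 0 := by
    ext F
    simp only [Dset, Schreier.schreierSetsWithMax, Schreier.schreierSets, Schreier.nthNonMultiple,
      filter_filter, add_zero, and_comm]
  rw [hD, Schreier.card_schreierSetsWithMax_eq_dseq hu k (r := 0) (by omega)]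
  congr 1
  rw [mul_add_one, mul_comm]
  omega
end

section
/- For every integer u ≥ 2 and every integer n with 1 ≤ n ≤ 2u − 1, |D_{u,n}| = F_n, the n-th Fibonacci number (F₁ = F₂ = 1). -/
open Finset

def nonMultiple (u k : ℕ) : ℕ := (u * k - 1) / (u - 1)

section nonMultiple

variable {u : ℕ}

theorem nonMultiple_eq (hu : 2 ≤ u) (k : ℕ) : nonMultiple u k = k + (k - 1) / (u - 1) := by
  rcases Nat.eq_zero_or_pos k with rfl | hk
  · simp [nonMultiple]
  have : u * k - 1 = (u - 1) * k + (k - 1) := by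
    rw [Nat.sub_one_mul, Nat.sub_add_sub_cancel (Nat.le_mul_of_pos_left k (by omega)) hk]
  rw [nonMultiple, this, Nat.mul_add_div (by omega)]

theorem strictMono_nonMultiple (hu : 2 ≤ u) : StrictMono (nonMultiple u) :=
  strictMono_nat_of_lt_succ fun k => by
    have : (k - 1) / (u - 1) ≤ (k + 1 - 1) / (u - 1) := Nat.div_le_div_right (by omega)
    rw [nonMultiple_eq hu, nonMultiple_eq hu]
    omega

theorem le_nonMultiple (hu : 2 ≤ u) (k : ℕ) : k ≤ nonMultiple u k :=
  (nonMultiple_eq hu k).symm ▸ Nat.le_add_right _ _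

theorem nonMultiple_of_lt (hu : 2 ≤ u) {k : ℕ} (hk : k < u) : nonMultiple u k = k := by
  rw [nonMultiple_eq hu, Nat.div_eq_of_lt (by omega), Nat.add_zero]

theorem forall_card_le_nonMultiple_iff (hu : 2 ≤ u) {S : Finset ℕ} {n : ℕ} (hS : S ⊆ Icc 1 n)
    (hn : n ≤ 2 * u - 1) : (∀ x ∈ S, #S ≤ nonMultiple u x) ↔ ∀ x ∈ S, #S ≤ x := by
  refine ⟨fun h x hx => ?_, fun h x hx => (h x hx).trans (le_nonMultiple hu x)⟩
  set m := S.min' ⟨x, hx⟩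
  have hm : m ∈ S := S.min'_mem _
  have hSm : #S ≤ n + 1 - m := by
    have : S ⊆ Icc m n := fun y hy => mem_Icc.2 ⟨S.min'_le y hy, (mem_Icc.1 (hS hy)).2⟩
    simpa using card_le_card this
  suffices #S ≤ m from this.trans (S.min'_le x hx)
  by_cases hmu : m < u
  · simpa [nonMultiple_of_lt hu hmu] using h m hm
  · omega

end nonMultiple

def schreierWithMax (n : ℕ) : Finset (Finset ℕ) :=
  (Icc 1 n).powerset.filter fun S => n ∈ S ∧ ∀ x ∈ S, #S ≤ x

theorem mem_schreierWithMax {n : ℕ} {S : Finset ℕ} :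
    S ∈ schreierWithMax n ↔ S ⊆ Icc 1 n ∧ n ∈ S ∧ ∀ x ∈ S, #S ≤ x := by
  rw [schreierWithMax, mem_filter, mem_powerset]

theorem card_filter_card_schreierWithMax (m k : ℕ) :
    #{S ∈ schreierWithMax (m + 1) | #S = k + 1} = (m - k).choose k := by
  have hIcc : m - k = #(Icc (k + 1) m) := by simp
  rw [hIcc, ← card_powersetCard]
  refine card_nbij' (·.erase (m + 1)) (insert (m + 1)) ?_ ?_ ?_ ?_
  · intro S hS
    simp only [mem_coe, mem_filter, mem_schreierWithMax, mem_powersetCard] at hS ⊢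
    obtain ⟨⟨hS, hmax, hschreier⟩, hcard⟩ := hS
    refine ⟨fun x hx => ?_, by rw [card_erase_of_mem hmax, hcard, Nat.add_sub_cancel]⟩
    have := hS (mem_of_mem_erase hx)
    have := hschreier x (mem_of_mem_erase hx)
    have := ne_of_mem_erase hx
    simp only [mem_Icc] at *
    omega
  · intro T hT
    simp only [mem_coe, mem_filter, mem_schreierWithMax, mem_powersetCard] at hT ⊢
    obtain ⟨hT, hcard⟩ := hT
    have hmax : m + 1 ∉ T := fun h => by simpa using hT h
    rw [card_insert_of_notMem hmax, hcard]
    have hk : k ≤ m := by have := card_le_card hT; simp only [Nat.card_Icc] at this; omega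
    have hbound : ∀ x ∈ insert (m + 1) T, k + 1 ≤ x ∧ x ≤ m + 1 := by
      intro x hx
      rcases mem_insert.1 hx with rfl | hx
      · omega
      · have := mem_Icc.1 (hT hx); omega
    refine ⟨⟨fun x hx => ?_, mem_insert_self _ _, fun x hx => (hbound x hx).1⟩, rfl⟩
    have := hbound x hx
    exact mem_Icc.2 ⟨by omega, this.2⟩
  · intro S hS
    simp only [mem_coe, mem_filter, mem_schreierWithMax] at hS
    exact insert_erase hS.1.2.1
  · intro T hT
    simp only [mem_coe, mem_powersetCard] at hT
    exact erase_insert fun h => by simpa using hT.1 h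

theorem sum_range_choose_sub_eq_fib (m : ℕ) :
    ∑ k ∈ range (m + 1), (m - k).choose k = Nat.fib (m + 1) := by
  rw [Nat.fib_succ_eq_sum_choose, ← Nat.sum_antidiagonal_swap]
  exact (Nat.sum_antidiagonal_eq_sum_range_succ (fun i j => j.choose i) m).symm

theorem card_schreierWithMax (m : ℕ) : #(schreierWithMax (m + 1)) = Nat.fib (m + 1) := by
  have hcard : ∀ S ∈ schreierWithMax (m + 1), #S - 1 ∈ range (m + 1) := by
    intro S hS
    have := card_le_card (mem_schreierWithMax.1 hS).1
    simp only [Nat.card_Icc] at this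
    exact mem_range.2 (by omega)
  rw [card_eq_sum_card_fiberwise hcard, ← sum_range_choose_sub_eq_fib]
  refine sum_congr rfl fun k _ => ?_
  rw [← card_filter_card_schreierWithMax]
  refine congrArg card (filter_congr fun S hS => ?_)
  have := card_pos.2 ⟨_, (mem_schreierWithMax.1 hS).2.1⟩
  omega

theorem Dset_eq_image_schreierWithMax {u n : ℕ} (hu : 2 ≤ u) (hn : n ≤ 2 * u - 1) :
    Dset u n = (schreierWithMax n).image (·.image (nonMultiple u)) := by
  have hinj := (strictMono_nonMultiple hu).injective
  rw [Dset, Gset, show (fun k => (u * k - 1) / (u - 1)) = nonMultiple u from rfl,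
    show (u * n - 1) / (u - 1) = nonMultiple u n from rfl, powerset_image, filter_image,
    schreierWithMax]
  congr 1
  refine filter_congr fun S hS => ?_
  rw [hinj.mem_finset_image, card_image_of_injective _ hinj, forall_mem_image,
    forall_card_le_nonMultiple_iff hu (mem_powerset.1 hS) hn]

theorem card_Dset_eq_fib (u n : ℕ) (hu : 2 ≤ u) (hn1 : 1 ≤ n) (hn2 : n ≤ 2 * u - 1) :
    (Dset u n).card = Nat.fib n := by
  obtain ⟨m, rfl⟩ := Nat.exists_eq_add_of_le' hn1
  rw [Dset_eq_image_schreierWithMax hu hn2,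
    card_image_of_injective _ (image_injective (strictMono_nonMultiple hu).injective),
    card_schreierWithMax]
end

section
/- For all positive integers u ≥ 2, s ≥ 0, and 1 ≤ t ≤ 2u − 2, the identity Σ_{k=us}^{us+⌊((t−1)u)/(2u−1)⌋} C(2us + t − k − 1, k) = Σ_{j=0}^{t−1} C(su + ⌊(tu + (u−1)j)/(2u−1)⌋ − 1, j) holds. -/
/-!
For `j < t ≤ 2u - 2` the floors simplify: `⌊(t-1)u/(2u-1)⌋ = ⌊(t-1)/2⌋` and
`⌊(tu + (u-1)j)/(2u-1)⌋ = ⌊(t+j)/2⌋`. Writing `n = us`, both sides then depend only on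
`n` and `t`, and both satisfy `X n (t + 2) = X (n + 1) t + C(n+t+1, n)`: on the left by splitting off
the first term, on the right by splitting off the last two terms and applying Pascal's rule to them.
They agree for `t = 0, 1`, so they agree everywhere.
-/

open Finset

theorem Nat.mul_add_one_div_two_mul_add_one {d w : ℕ} (hd : d ≤ 2 * w) :
    d * (w + 1) / (2 * w + 1) = d / 2 := by
  obtain ⟨q, r, rfl, hr⟩ : ∃ q r, d = 2 * q + r ∧ r < 2 := ⟨d / 2, d % 2, by omega, by omega⟩
  have hsplit : (2 * q + r) * (w + 1) = (q + r * (w + 1)) + q * (2 * w + 1) := by ring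
  have hrem : q + r * (w + 1) < 2 * w + 1 := by interval_cases r <;> omega
  rw [hsplit, Nat.add_mul_div_right _ _ (by omega), Nat.div_eq_of_lt hrem]
  omega

theorem Nat.mul_add_one_add_mul_div_two_mul_add_one {a j w : ℕ} (hj : j ≤ a) (ha : a - j ≤ 2 * w) :
    (a * (w + 1) + w * j) / (2 * w + 1) = (a + j) / 2 := by
  obtain ⟨d, rfl⟩ : ∃ d, a = j + d := ⟨a - j, by omega⟩
  have hsplit : (j + d) * (w + 1) + w * j = d * (w + 1) + j * (2 * w + 1) := by ring
  rw [hsplit, Nat.add_mul_div_right _ _ (by omega),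
    Nat.mul_add_one_div_two_mul_add_one (by omega)]
  omega

def shallowDiagonalSum (n t : ℕ) : ℕ :=
  ∑ i ∈ range ((t + 1) / 2), (n + t - 1 - i).choose (n + i)

def floorBinomialSum (n t : ℕ) : ℕ :=
  ∑ j ∈ range t, (n + (t + j) / 2 - 1).choose j

theorem shallowDiagonalSum_add_two (n t : ℕ) :
    shallowDiagonalSum n (t + 2) = shallowDiagonalSum (n + 1) t + (n + t + 1).choose n := by
  rw [shallowDiagonalSum, show (t + 2 + 1) / 2 = (t + 1) / 2 + 1 by omega, sum_range_succ']
  congr 2 with i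
  congr 1 <;> omega

theorem floorBinomialSum_add_two (n t : ℕ) :
    floorBinomialSum n (t + 2) = floorBinomialSum (n + 1) t + (n + t + 1).choose n := by
  rw [floorBinomialSum, floorBinomialSum, sum_range_succ, sum_range_succ, add_assoc]
  congr 1
  · exact sum_congr rfl fun j _ => by congr 1; omega
  · rw [show n + (t + 2 + t) / 2 - 1 = n + t by omega,
      show n + (t + 2 + (t + 1)) / 2 - 1 = n + t by omega, ← Nat.choose_succ_succ]
    exact Nat.choose_symm_of_eq_add (by omega)

theorem shallowDiagonalSum_eq_floorBinomialSum : ∀ n t, shallowDiagonalSum n t = floorBinomialSum n t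
  | n, 0 => rfl
  | n, 1 => by simp [shallowDiagonalSum, floorBinomialSum]
  | n, t + 2 => by
    rw [shallowDiagonalSum_add_two, floorBinomialSum_add_two,
      shallowDiagonalSum_eq_floorBinomialSum (n + 1) t]

theorem binomial_tail_identity_general (u s t : ℕ) (ht1 : 1 ≤ t) (ht2 : t ≤ 2 * u - 2) :
    ∑ k ∈ Finset.Icc (u * s) (u * s + (t - 1) * u / (2 * u - 1)),
        (2 * u * s + t - k - 1).choose k =
      ∑ j ∈ Finset.range t, (s * u + (t * u + (u - 1) * j) / (2 * u - 1) - 1).choose j := by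
  obtain ⟨w, rfl⟩ : ∃ w, u = w + 1 := ⟨u - 1, by omega⟩
  rw [show 2 * (w + 1) - 1 = 2 * w + 1 by omega, add_tsub_cancel_right,
    Nat.mul_add_one_div_two_mul_add_one (by omega)]
  set n := (w + 1) * s
  have hlhs : ∑ k ∈ Icc n (n + (t - 1) / 2), (2 * (w + 1) * s + t - k - 1).choose k =
      shallowDiagonalSum n t := by
    rw [← Ico_add_one_right_eq_Icc, sum_Ico_eq_sum_range, shallowDiagonalSum,
      show n + (t - 1) / 2 + 1 - n = (t + 1) / 2 by omega]
    refine sum_congr rfl fun i _ => ?_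
    congr 1
    rw [show 2 * (w + 1) * s = n + n by ring]
    omega
  have hrhs : ∑ j ∈ range t, (s * (w + 1) + (t * (w + 1) + w * j) / (2 * w + 1) - 1).choose j =
      floorBinomialSum n t := by
    refine sum_congr rfl fun j hj => ?_
    rw [mem_range] at hj
    rw [Nat.mul_add_one_add_mul_div_two_mul_add_one hj.le (by omega), mul_comm s]
  rw [hlhs, hrhs, shallowDiagonalSum_eq_floorBinomialSum]

theorem binomial_tail_identity (u s t : ℕ) (hu : 2 ≤ u) (ht1 : 1 ≤ t) (ht2 : t ≤ 2 * u - 2) :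
    ∑ k ∈ Finset.Icc (u * s) (u * s + (t - 1) * u / (2 * u - 1)),
        (2 * u * s + t - k - 1).choose k =
      ∑ j ∈ Finset.range t, (s * u + (t * u + (u - 1) * j) / (2 * u - 1) - 1).choose j :=
  binomial_tail_identity_general u s t ht1 ht2
end

section
/- For every integer u ≥ 2 and all integers n ≥ 2u, the identity Σ_{i=0}^{⌊(n−1)/u⌋} C(⌊(n+(u−1)i−u)/(2u−1)⌋, i) = Σ_{i=0}^{⌊(n−1)/u⌋−1} C(⌊(n+(u−1)i−2u)/(2u−1)⌋, i) + Σ_{i=0}^{⌊n/u⌋−2} C(⌊(n+(u−1)i−u)/(2u−1)⌋ − 1, i) holds. -/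
/-!
Write `F i = ⌊(n + (u-1)i - u)/(2u-1)⌋` for the upper index on the left. Raising `i` by one
adds `u - 1` to the numerator, so `F (i+1) - 1` is the upper index of the first sum on the
right, and `F (i+1) ≥ 1` because `n ≥ 2u`. Pascal's rule
`C(F(i+1), i+1) = C(F(i+1)-1, i) + C(F(i+1)-1, i+1)` splits the left side into that first sum
plus `∑ C(F i - 1, i)`. The latter is the last sum on the right, extended by terms that vanish:
for `i ≥ ⌊n/u⌋ - 1` one has `n < u(i+2)`, which forces `F i ≤ i`.
-/

theorem Nat.sum_range_succ_choose_eq {a b : ℕ → ℕ} {K : ℕ}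
    (hab : ∀ i < K, a (i + 1) = b i + 1) :
    ∑ i ∈ Finset.range (K + 1), (a i).choose i =
      ∑ i ∈ Finset.range K, (b i).choose i + ∑ i ∈ Finset.range (K + 1), (a i - 1).choose i := by
  have hpascal : ∀ i ∈ Finset.range K,
      (a (i + 1)).choose (i + 1) = (b i).choose i + (a (i + 1) - 1).choose (i + 1) := by
    intro i hi
    rw [hab i (Finset.mem_range.mp hi), Nat.add_sub_cancel, Nat.choose_succ_succ']
  rw [Finset.sum_range_succ', Finset.sum_range_succ' (fun i => (a i - 1).choose i),
    Finset.sum_congr rfl hpascal, Finset.sum_add_distrib]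
  simp only [Nat.choose_zero_right]
  ring

def upperIndex (u n i : ℕ) : ℕ := (n + (u - 1) * i - u) / (2 * u - 1)

section

variable {u n : ℕ}

theorem upperIndex_succ (hu : 0 < u) (hn : 2 * u ≤ n) (i : ℕ) :
    upperIndex u n (i + 1) = (n + (u - 1) * i - 2 * u) / (2 * u - 1) + 1 := by
  have hshift : n + (u - 1) * (i + 1) - u = n + (u - 1) * i - 2 * u + (2 * u - 1) := by
    rw [Nat.mul_succ]
    omega
  rw [upperIndex, hshift, Nat.add_div_right _ (by omega)]

theorem upperIndex_le (hu : 0 < u) {i : ℕ} (hi : n < u * (i + 2)) : upperIndex u n i ≤ i := by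
  rw [upperIndex, Nat.div_le_iff_le_mul_add_pred (by omega)]
  have h₁ : (u - 1) * i = u * i - i := by rw [Nat.sub_mul, one_mul]
  have h₂ : (2 * u - 1) * i = 2 * (u * i) - i := by rw [Nat.sub_mul, one_mul, mul_assoc]
  have h₃ : i ≤ u * i := Nat.le_mul_of_pos_left i hu
  have h₄ : u * (i + 2) = u * i + 2 * u := by ring
  omega

theorem choose_upperIndex_sub_one_eq_zero (hu : 0 < u) (hn : 2 * u ≤ n) {i : ℕ}
    (hi : n / u - 1 ≤ i) : (upperIndex u n i - 1).choose i = 0 := by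
  have hlt : n < u * (i + 2) :=
    (Nat.lt_mul_div_succ n hu).trans_le (Nat.mul_le_mul_left u (by omega))
  have hpos : 1 ≤ i := by
    have := (Nat.le_div_iff_mul_le hu).mpr hn
    omega
  exact Nat.choose_eq_zero_of_lt (by have := upperIndex_le hu hlt; omega)

end

theorem binomial_recurrence_identity (u n : ℕ) (hu : 2 ≤ u) (hn : 2 * u ≤ n) :
    ∑ i ∈ Finset.range ((n - 1) / u + 1),
        ((n + (u - 1) * i - u) / (2 * u - 1)).choose i =
      (∑ i ∈ Finset.range ((n - 1) / u),
        ((n + (u - 1) * i - 2 * u) / (2 * u - 1)).choose i) +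
      ∑ i ∈ Finset.range (n / u - 1),
        ((n + (u - 1) * i - u) / (2 * u - 1) - 1).choose i := by
  have hu₀ : 0 < u := by omega
  have hrange : n / u - 1 ≤ (n - 1) / u + 1 :=
    calc n / u - 1 ≤ n / u := Nat.sub_le _ _
      _ ≤ (n - 1 + u) / u := Nat.div_le_div_right (by omega)
      _ = (n - 1) / u + 1 := Nat.add_div_right _ hu₀
  have htail : ∑ i ∈ Finset.range (n / u - 1), (upperIndex u n i - 1).choose i =
      ∑ i ∈ Finset.range ((n - 1) / u + 1), (upperIndex u n i - 1).choose i :=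
    Finset.sum_subset (Finset.range_subset_range.mpr hrange) fun i _ hi =>
      choose_upperIndex_sub_one_eq_zero hu₀ hn (by simpa using hi)
  exact (Nat.sum_range_succ_choose_eq fun i _ => upperIndex_succ hu₀ hn i).trans
    (congrArg _ htail.symm)
end
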